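/- arXiv:2409.01660 — 10 statements merged into one kernel-verified Lean document; each statement's English description precedes it below -/
import Mathlib

section
/- Let p ∈ ℕ*, a₁,…,a_p ∈ ℝ and λ > 0 with max(a₁,0) + ⋯ + max(a_p,0) < 1. Set η := 1 − max(a₁,0) − ⋯ − max(a_p,0), and for 1 ≤ i ≤ p set αᵢ := η(p−i+1)/p + Σ_{j=i}^p max(a_j,0), so α₁ = 1 and each αᵢ > 0. Define V : ℕ^p → [1,∞) by V(x₁,…,x_p) := α₁x₁ + ⋯ + α_p x_p + 1. Then there exist ε ∈ (0,1], K < ∞ and a finite set C ⊂ ℕ^p such that for every x = (x₁,…,x_p) ∈ ℕ^p, Σ_{ℓ∈ℕ} (e^{−s_x} s_x^ℓ / ℓ!) · V(ℓ, x₁,…,x_{p−1}) − V(x) ≤ −ε·V(x) + K·1_C(x). -/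
open scoped BigOperators
open Classical

/-- The Poisson probability mass function with parameter `s` at `k`. -/
noncomputable def poissonPMF (s : ℝ) (k : ℕ) : ℝ :=
  Real.exp (-s) * s ^ k / (Nat.factorial k)

/-- The (truncated) intensity `s_x = max(a₁x₁ + ⋯ + a_p x_p + λ, 0)`. -/
noncomputable def hawkesS {p : ℕ} (a : Fin p → ℝ) (lam : ℝ) (x : Fin p → ℕ) : ℝ :=
  max (∑ i, a i * (x i : ℝ) + lam) 0

/-- One step of the chain: from state `x = (x₁,…,x_p)` and new value `ℓ`,
the next state is `(ℓ, x₁,…,x_{p−1})`. -/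
def shift {p : ℕ} (hp : 0 < p) (x : Fin p → ℕ) (ℓ : ℕ) : Fin p → ℕ :=
  fun i => if (i : ℕ) = 0 then ℓ
    else x ⟨(i : ℕ) - 1, Nat.lt_of_le_of_lt (Nat.sub_le _ _) i.isLt⟩

/-- `η := 1 − (a₁)₊ − ⋯ − (a_p)₊`. -/
noncomputable def etaCoef {p : ℕ} (a : Fin p → ℝ) : ℝ :=
  1 - ∑ j, max (a j) 0

/-- The coefficient `αᵢ := η (p−i+1)/p + Σ_{j=i}^p (a_j)₊` (here `i : Fin p` is
the `0`-indexed version of the `1`-indexed `i`, so `p − i + 1` becomes `p − i`). -/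
noncomputable def alphaCoef {p : ℕ} (a : Fin p → ℝ) (i : Fin p) : ℝ :=
  etaCoef a * ((p : ℝ) - (i : ℕ)) / p
    + ∑ j ∈ Finset.univ.filter (fun j => i ≤ j), max (a j) 0

/-- The Lyapunov function `V(x₁,…,x_p) := α₁x₁ + ⋯ + α_p x_p + 1`. -/
noncomputable def hawkesV {p : ℕ} (a : Fin p → ℝ) (x : Fin p → ℕ) : ℝ :=
  ∑ i, alphaCoef a i * (x i : ℝ) + 1

/-!
Shifting the state replaces `V x` by `ℓ + V x - ∑ i, (η / p + (aᵢ)₊) xᵢ`: the new value `ℓ` enters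
with weight `α₁ = 1`, and consecutive coefficients differ by `αᵢ - αᵢ₊₁ = η / p + (aᵢ)₊`
(with `α_{p+1} = 0`). Averaging over `ℓ ~ Poisson(s_x)` and using `s_x ≤ ∑ i, (aᵢ)₊ xᵢ + λ`, the
drift is at most `λ - (η / p) ∑ i, xᵢ`. Since every `αᵢ ≤ 1`, `V x ≤ ∑ i, xᵢ + 1`, so half of this
linear decrease dominates `-(η / 2p) V x` outside a finite box.
-/

lemma hasSum_poissonPMF (s : ℝ) : HasSum (poissonPMF s) 1 := by
  have h := (NormedSpace.expSeries_div_hasSum_exp s).mul_left (Real.exp (-s))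
  rw [← Real.exp_eq_exp_ℝ, ← Real.exp_add, neg_add_cancel, Real.exp_zero] at h
  exact h.congr_fun fun k => mul_div_assoc _ _ _

lemma poissonPMF_succ_mul (s : ℝ) (n : ℕ) :
    poissonPMF s (n + 1) * (n + 1 : ℕ) = s * poissonPMF s n := by
  simp only [poissonPMF, Nat.factorial_succ, pow_succ, Nat.cast_mul]
  field_simp

lemma hasSum_poissonPMF_mul_self (s : ℝ) :
    HasSum (fun ℓ : ℕ => poissonPMF s ℓ * ℓ) s := by
  have h := ((hasSum_poissonPMF s).mul_left s).congr_fun fun n => poissonPMF_succ_mul s n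
  simpa using (hasSum_nat_add_iff (f := fun ℓ : ℕ => poissonPMF s ℓ * ℓ) 1).mp (by simpa using h)

lemma tsum_poissonPMF_mul_natCast_add (s c : ℝ) :
    ∑' ℓ : ℕ, poissonPMF s ℓ * (ℓ + c) = s + c := by
  simpa [mul_add] using
    ((hasSum_poissonPMF_mul_self s).add ((hasSum_poissonPMF s).mul_right c)).tsum_eq

lemma alphaCoef_zero {n : ℕ} (a : Fin (n + 1) → ℝ) : alphaCoef a 0 = 1 := by
  simp only [alphaCoef, etaCoef, Fin.zero_le, Finset.filter_true, Fin.val_zero, Nat.cast_zero]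
  field_simp
  ring

lemma alphaCoef_castSucc_sub_succ {n : ℕ} (a : Fin (n + 1) → ℝ) (i : Fin n) :
    alphaCoef a i.castSucc - alphaCoef a i.succ
      = etaCoef a / (n + 1 : ℕ) + max (a i.castSucc) 0 := by
  have hset : Finset.univ.filter (fun j => i.castSucc ≤ j)
      = insert i.castSucc (Finset.univ.filter (fun j => i.succ ≤ j)) := by
    ext j
    simp only [Finset.mem_filter, Finset.mem_univ, true_and, Finset.mem_insert, Fin.le_def,
      Fin.val_castSucc, Fin.val_succ, Fin.ext_iff]
    omega
  have hnot : i.castSucc ∉ Finset.univ.filter (fun j => i.succ ≤ j) := by simp [Fin.le_def]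
  rw [alphaCoef, alphaCoef, hset, Finset.sum_insert hnot, Fin.val_castSucc, Fin.val_succ]
  field_simp
  push_cast
  ring

lemma alphaCoef_last {n : ℕ} (a : Fin (n + 1) → ℝ) :
    alphaCoef a (Fin.last n) = etaCoef a / (n + 1 : ℕ) + max (a (Fin.last n)) 0 := by
  have hset : Finset.univ.filter (fun j => Fin.last n ≤ j) = {Fin.last n} := by
    ext j
    simp [Fin.last_le_iff]
  rw [alphaCoef, hset, Finset.sum_singleton, Fin.val_last]
  field_simp
  push_cast
  ring

lemma alphaCoef_le_one {p : ℕ} (a : Fin p → ℝ) (h : 0 ≤ etaCoef a) (i : Fin p) :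
    alphaCoef a i ≤ 1 := by
  have hp : (0 : ℝ) < p := by exact_mod_cast i.pos
  have htail : ∑ j ∈ Finset.univ.filter (fun j => i ≤ j), max (a j) 0 ≤ ∑ j, max (a j) 0 :=
    Finset.sum_le_sum_of_subset_of_nonneg (Finset.filter_subset _ _)
      fun j _ _ => le_max_right _ _
  have hhead : etaCoef a * ((p : ℝ) - (i : ℕ)) / p ≤ etaCoef a := by
    rw [div_le_iff₀ hp]
    nlinarith [(Nat.cast_nonneg (i : ℕ) : (0 : ℝ) ≤ _)]
  have : etaCoef a + ∑ j, max (a j) 0 = 1 := by rw [etaCoef]; ring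
  rw [alphaCoef]
  linarith

lemma hawkesV_le_sum_add_one {p : ℕ} (a : Fin p → ℝ) (h : 0 ≤ etaCoef a) (x : Fin p → ℕ) :
    hawkesV a x ≤ ∑ i, (x i : ℝ) + 1 := by
  rw [hawkesV]
  gcongr with i
  exact mul_le_of_le_one_left (Nat.cast_nonneg _) (alphaCoef_le_one a h i)

lemma hawkesV_shift {p : ℕ} (hp : 0 < p) (a : Fin p → ℝ) (x : Fin p → ℕ) (ℓ : ℕ) :
    hawkesV a (shift hp x ℓ)
      = ℓ + hawkesV a x - ∑ i, (etaCoef a / p + max (a i) 0) * x i := by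
  obtain ⟨n, rfl⟩ : ∃ n, p = n + 1 := ⟨p - 1, (Nat.succ_pred_eq_of_pos hp).symm⟩
  have hdiff : ∀ i : Fin n, (etaCoef a / (n + 1 : ℕ) + max (a i.castSucc) 0) * x i.castSucc
      = alphaCoef a i.castSucc * x i.castSucc - alphaCoef a i.succ * x i.castSucc := by
    intro i
    rw [← alphaCoef_castSucc_sub_succ, sub_mul]
  have h0 : shift hp x ℓ 0 = ℓ := rfl
  have hs : ∀ i : Fin n, shift hp x ℓ i.succ = x i.castSucc := fun i => rfl
  rw [hawkesV, hawkesV, Fin.sum_univ_succ, Fin.sum_univ_castSucc, Fin.sum_univ_castSucc]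
  simp only [h0, hs, hdiff, Finset.sum_sub_distrib, alphaCoef_zero, alphaCoef_last]
  ring

lemma hawkesS_le {p : ℕ} (a : Fin p → ℝ) {lam : ℝ} (hlam : 0 ≤ lam) (x : Fin p → ℕ) :
    hawkesS a lam x ≤ ∑ i, max (a i) 0 * x i + lam := by
  have hpos : 0 ≤ ∑ i, max (a i) 0 * (x i : ℝ) := by positivity
  have hle : ∑ i, a i * (x i : ℝ) ≤ ∑ i, max (a i) 0 * x i := by
    gcongr with i
    exact le_max_left _ _
  exact max_le (by linarith) (by linarith)

lemma hawkesV_drift_le {p : ℕ} (hp : 0 < p) (a : Fin p → ℝ) {lam : ℝ} (hlam : 0 ≤ lam)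
    (x : Fin p → ℕ) :
    (∑' ℓ : ℕ, poissonPMF (hawkesS a lam x) ℓ * hawkesV a (shift hp x ℓ)) - hawkesV a x
      ≤ lam - etaCoef a / p * ∑ i, (x i : ℝ) := by
  simp only [hawkesV_shift, add_sub_assoc, tsum_poissonPMF_mul_natCast_add, add_mul,
    Finset.sum_add_distrib, ← Finset.mul_sum]
  linarith [hawkesS_le a hlam x]

theorem exists_drift_of_le_sub_mul_sum {ι : Type*} [Fintype ι] {Δ V : (ι → ℕ) → ℝ}
    {b δ : ℝ} (hδ : 0 < δ) (hΔ : ∀ x, Δ x ≤ b - δ * ∑ i, (x i : ℝ))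
    (hV : ∀ x, V x ≤ ∑ i, (x i : ℝ) + 1) :
    ∃ K : ℝ, ∃ C : Finset (ι → ℕ),
      ∀ x, Δ x ≤ -(δ / 2) * V x + K * (if x ∈ C then 1 else 0) := by
  obtain ⟨ε, hε, rfl⟩ : ∃ ε, 0 < ε ∧ δ = 2 * ε := ⟨δ / 2, by positivity, by ring⟩
  refine ⟨b + ε, Finset.Iic fun _ => ⌈(b + ε) / ε⌉₊, fun x => ?_⟩
  have hbound : Δ x ≤ -ε * V x + (b + ε) - ε * ∑ i, (x i : ℝ) := by
    linarith [hΔ x, mul_le_mul_of_nonneg_left (hV x) hε.le]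
  split_ifs with hx
  · have : 0 ≤ ε * ∑ i, (x i : ℝ) := by positivity
    linarith
  · obtain ⟨i, hi⟩ : ∃ i, ⌈(b + ε) / ε⌉₊ < x i := by
      simpa [Finset.mem_Iic, Pi.le_def] using hx
    have hxi : (x i : ℝ) ≤ ∑ j, (x j : ℝ) :=
      Finset.single_le_sum (f := fun j => (x j : ℝ)) (fun j _ => Nat.cast_nonneg _)
        (Finset.mem_univ i)
    have hKN : b + ε ≤ ε * ∑ j, (x j : ℝ) := by
      rw [← div_le_iff₀' hε]
      exact (Nat.le_ceil _).trans ((Nat.cast_le.mpr hi.le).trans hxi)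
    linarith

/-- If `(a₁)₊ + ⋯ + (a_p)₊ < 1`, then the linear function `V` built from the
coefficients `αᵢ` satisfies a geometric drift condition `D(V, ε, K, C)` with
`ε ∈ (0,1]`, `K < ∞` and `C` a finite set. -/
theorem hawkes_drift_condition (p : ℕ) (hp : 0 < p) (a : Fin p → ℝ)
    (lam : ℝ) (hlam : 0 < lam)
    (hsum : ∑ i, max (a i) 0 < 1) :
    ∃ ε : ℝ, ε ∈ Set.Ioc (0 : ℝ) 1 ∧
      ∃ K : ℝ, ∃ C : Finset (Fin p → ℕ),
        ∀ x : Fin p → ℕ,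
          (∑' ℓ : ℕ, poissonPMF (hawkesS a lam x) ℓ * hawkesV a (shift hp x ℓ))
              - hawkesV a x
            ≤ -ε * hawkesV a x + K * (if x ∈ C then 1 else 0) := by
  have hη : 0 < etaCoef a := by rw [etaCoef]; linarith
  have hη1 : etaCoef a ≤ 1 := by
    have : 0 ≤ ∑ i, max (a i) 0 := Finset.sum_nonneg fun i _ => le_max_right _ _
    rw [etaCoef]; linarith
  have hp1 : (1 : ℝ) ≤ p := by exact_mod_cast hp
  obtain ⟨K, C, hC⟩ := exists_drift_of_le_sub_mul_sum (div_pos hη (by positivity))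
    (hawkesV_drift_le hp a hlam.le) (hawkesV_le_sum_add_one a hη.le)
  refine ⟨etaCoef a / p / 2, ⟨by positivity, ?_⟩, K, C, hC⟩
  rw [div_le_one two_pos, div_le_iff₀ (by positivity)]
  linarith
end

section
/- Let a, b ∈ ℝ with a² + 3b ≥ 0, and define c₋ := (−1/27)(2a³ + 9ab + 2(a² + 3b)^{3/2}) and c₊ := (−1/27)(2a³ + 9ab − 2(a² + 3b)^{3/2}). Then for every c ∈ ℝ, Disc(P) := a²b² + 4b³ − 4a³c − 18abc − 27c² < 0 if and only if c < c₋ or c > c₊. -/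
/-- Suppose `a² + 3b ≥ 0` and set
`c₋ = (−1/27)(2a³ + 9ab + 2(a²+3b)^{3/2})`, `c₊ = (−1/27)(2a³ + 9ab − 2(a²+3b)^{3/2})`.
Then for every `c`, the discriminant `Disc(P) = a²b² + 4b³ − 4a³c − 18abc − 27c²`
of `P(X) = X³ − aX² − bX − c` is negative iff `c < c₋` or `c > c₊`. -/
theorem disc_neg_iff (a b : ℝ) (h : 0 ≤ a ^ 2 + 3 * b) :
    ∀ c : ℝ,
      a ^ 2 * b ^ 2 + 4 * b ^ 3 - 4 * a ^ 3 * c - 18 * a * b * c - 27 * c ^ 2 < 0 ↔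
        (c < (-1 / 27) * (2 * a ^ 3 + 9 * a * b + 2 * Real.sqrt (a ^ 2 + 3 * b) ^ 3)
          ∨ (-1 / 27) * (2 * a ^ 3 + 9 * a * b - 2 * Real.sqrt (a ^ 2 + 3 * b) ^ 3) < c) := by
  intro c
  set s := Real.sqrt (a ^ 2 + 3 * b) with hsdef
  have hs : s ^ 2 = a ^ 2 + 3 * b := Real.sq_sqrt h
  have hs0 : 0 ≤ s := Real.sqrt_nonneg _
  set cm : ℝ := (-1 / 27) * (2 * a ^ 3 + 9 * a * b + 2 * s ^ 3) with hcm
  set cp : ℝ := (-1 / 27) * (2 * a ^ 3 + 9 * a * b - 2 * s ^ 3) with hcp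
  have hle : cm ≤ cp := by
    have : 0 ≤ s ^ 3 := pow_nonneg hs0 3
    rw [hcm, hcp]; nlinarith
  have key : a ^ 2 * b ^ 2 + 4 * b ^ 3 - 4 * a ^ 3 * c - 18 * a * b * c - 27 * c ^ 2
      = -27 * (c - cm) * (c - cp) := by
    rw [hcm, hcp]
    linear_combination (-(4:ℝ)/27) * (s ^ 4 + s ^ 2 * (a ^ 2 + 3 * b) + (a ^ 2 + 3 * b) ^ 2) *
      (hs)
  rw [key]
  constructor
  · intro hlt
    have hpos : 0 < (c - cm) * (c - cp) := by nlinarith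
    rcases mul_pos_iff.mp hpos with ⟨h1, h2⟩ | ⟨h1, h2⟩
    · right; linarith
    · left; linarith
  · rintro (h1 | h1)
    · nlinarith
    · nlinarith
end

section
/- Let a, b, c ∈ ℝ and λ > 0 with b ≤ 0 and c ≤ 0, and let A := {(i,j,k) ∈ ℕ³ : ai + bj + ck + λ ≤ 0}. Then for every (i,j,k) ∈ A, the 3-step transition probability of the discrete-time Hawkes chain with memory 3 from (i,j,k) to (0,0,0) is at least e^{−2λ}; in particular inf_{(i,j,k)∈A} P³((i,j,k),(0,0,0)) > 0, i.e. A is a small set. -/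
open scoped BigOperators
open Classical

/-- The (truncated) intensity `s_{ijk} = max(ai + bj + ck + λ, 0)`. -/
noncomputable def s3 (a b c lam : ℝ) (x : ℕ × ℕ × ℕ) : ℝ :=
  max (a * x.1 + b * x.2.1 + c * x.2.2 + lam) 0

/-- Transition kernel of the discrete-time Hawkes chain with memory `3`. -/
noncomputable def hawkes3P (a b c lam : ℝ) (x y : ℕ × ℕ × ℕ) : ℝ :=
  if y.2.1 = x.1 ∧ y.2.2 = x.2.1 then poissonPMF (s3 a b c lam x) y.1 else 0

/-- `n`-step transition kernel of a Markov kernel `P` on a countable state space. -/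
noncomputable def kernelPow {S : Type*} (P : S → S → ℝ) : ℕ → S → S → ℝ
  | 0 => fun x y => if x = y then 1 else 0
  | n + 1 => fun x y => ∑' z, kernelPow P n x z * P z y

lemma kernelPow_succ {S : Type*} (P : S → S → ℝ) (n : ℕ) (x y : S) :
    kernelPow P (n+1) x y = ∑' z, kernelPow P n x z * P z y := rfl

lemma kernelPow_one {S : Type*} (P : S → S → ℝ) (x y : S) :
    kernelPow P 1 x y = P x y := by
  rw [kernelPow_succ, tsum_eq_single x]
  · simp [kernelPow]
  · intro b hb
    simp [kernelPow, Ne.symm hb]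

lemma kernelPow_two {S : Type*} (P : S → S → ℝ) (x y : S) :
    kernelPow P 2 x y = ∑' z, P x z * P z y := by
  rw [kernelPow_succ]
  exact tsum_congr fun z => by rw [kernelPow_one]

lemma k2_zero (a b c lam : ℝ) (i j k m : ℕ) (hm : m ≠ i) :
    kernelPow (hawkes3P a b c lam) 2 (i, j, k) (0, 0, m) = 0 := by
  rw [kernelPow_two]
  convert tsum_zero with w
  obtain ⟨w1, w2, w3⟩ := w
  by_cases h1 : w2 = i ∧ w3 = j
  · have h2 : ¬ ((0:ℕ) = w1 ∧ m = w2) := fun ⟨_, hm'⟩ => hm (hm'.trans h1.1)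
    simp [hawkes3P, h2]
  · simp [hawkes3P, h1]

lemma k3_eq (a b c lam : ℝ) (i j k : ℕ) :
    kernelPow (hawkes3P a b c lam) 3 (i, j, k) (0, 0, 0) =
      poissonPMF (s3 a b c lam (i, j, k)) 0 * poissonPMF (s3 a b c lam (0, i, j)) 0 *
        poissonPMF (s3 a b c lam (0, 0, i)) 0 := by
  rw [kernelPow_succ, tsum_eq_single ((0, 0, i) : ℕ × ℕ × ℕ)]
  · rw [kernelPow_two, tsum_eq_single ((0, i, j) : ℕ × ℕ × ℕ)]
    · simp [hawkes3P]
    · intro w hw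
      obtain ⟨w1, w2, w3⟩ := w
      by_cases h1 : w2 = i ∧ w3 = j
      · have hw1 : w1 ≠ 0 := by
          intro h0; exact hw (by simp [h0, h1.1, h1.2])
        have h2 : ¬ ((0:ℕ) = w1 ∧ i = w2) := fun ⟨h0, _⟩ => hw1 h0.symm
        simp [hawkes3P, h2]
      · simp [hawkes3P, h1]
  · intro z hz
    obtain ⟨z1, z2, z3⟩ := z
    by_cases h1 : z1 = 0 ∧ z2 = 0
    · have hz3 : z3 ≠ i := by
        intro h0; exact hz (by simp [h0, h1.1, h1.2])
      rw [h1.1, h1.2, k2_zero a b c lam i j k z3 hz3, zero_mul]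
    · have h2 : ¬ ((0:ℕ) = z1 ∧ (0:ℕ) = z2) := fun ⟨ha, hb⟩ => h1 ⟨ha.symm, hb.symm⟩
      simp [hawkes3P, h2]

/-- If `b ≤ 0` and `c ≤ 0`, then on the set `A = {(i,j,k) : ai + bj + ck + λ ≤ 0}`
the 3-step transition probability to `(0,0,0)` is bounded below by `e^{−2λ}`;
in particular `inf_{x ∈ A} P³(x,(0,0,0)) > 0`, i.e. `A` is a small set. -/
theorem A_is_small (a b c lam : ℝ) (hlam : 0 < lam) (hb : b ≤ 0) (hc : c ≤ 0) :
    (∀ i j k : ℕ, a * i + b * j + c * k + lam ≤ 0 →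
        Real.exp (-(2 * lam)) ≤ kernelPow (hawkes3P a b c lam) 3 (i, j, k) (0, 0, 0))
      ∧ ∃ δ : ℝ, 0 < δ ∧
          ∀ i j k : ℕ, a * i + b * j + c * k + lam ≤ 0 →
            δ ≤ kernelPow (hawkes3P a b c lam) 3 (i, j, k) (0, 0, 0) := by
  have key : ∀ i j k : ℕ, a * i + b * j + c * k + lam ≤ 0 →
      Real.exp (-(2 * lam)) ≤ kernelPow (hawkes3P a b c lam) 3 (i, j, k) (0, 0, 0) := by
    intro i j k h
    rw [k3_eq]
    have hs1 : s3 a b c lam (i, j, k) = 0 := by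
      simp only [s3]; exact max_eq_right h
    have hs2 : s3 a b c lam (0, i, j) ≤ lam := by
      simp only [s3]
      refine max_le ?_ hlam.le
      have hbi : b * (i:ℝ) ≤ 0 := mul_nonpos_of_nonpos_of_nonneg hb (Nat.cast_nonneg i)
      have hcj : c * (j:ℝ) ≤ 0 := mul_nonpos_of_nonpos_of_nonneg hc (Nat.cast_nonneg j)
      push_cast
      nlinarith
    have hs3 : s3 a b c lam (0, 0, i) ≤ lam := by
      simp only [s3]
      refine max_le ?_ hlam.le
      have hci : c * (i:ℝ) ≤ 0 := mul_nonpos_of_nonpos_of_nonneg hc (Nat.cast_nonneg i)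
      push_cast
      nlinarith
    have hpmf : ∀ s : ℝ, poissonPMF s 0 = Real.exp (-s) := by
      intro s; simp [poissonPMF]
    rw [hpmf, hpmf, hpmf, hs1]
    have h2 : Real.exp (-(2*lam)) = Real.exp (-lam) * Real.exp (-lam) := by
      rw [← Real.exp_add]; ring_nf
    rw [h2]
    have e2 : Real.exp (-lam) ≤ Real.exp (-(s3 a b c lam (0, i, j))) :=
      Real.exp_le_exp.mpr (by linarith)
    have e3 : Real.exp (-lam) ≤ Real.exp (-(s3 a b c lam (0, 0, i))) :=
      Real.exp_le_exp.mpr (by linarith)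
    simp only [neg_zero, Real.exp_zero, one_mul]
    exact mul_le_mul e2 e3 (Real.exp_pos _).le (Real.exp_pos _).le
  exact ⟨key, Real.exp (-(2*lam)), Real.exp_pos _, key⟩
end

section
/- For all a, b, c, α ∈ ℝ, the determinant of the symmetric 3×3 matrix M_α with rows (−1, (a−α)/2, α(a+α)/2), ((a−α)/2, b−α², (c+bα)/2), (α(a+α)/2, (c+bα)/2, cα) equals (1/4)(α³ + aα² − bα + c)². -/
/-- The determinant of the matrix `M_α` of the quadratic form
`q(i,j,k) = −i² + (b−α²)j² + cα k² + (a−α)ij + α(a+α)ik + (c+bα)jk`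
equals `(1/4)(α³ + aα² − bα + c)²`. -/
theorem det_M_alpha (a b c α : ℝ) :
    Matrix.det
      (!![-1,               (a - α) / 2,     α * (a + α) / 2;
          (a - α) / 2,      b - α ^ 2,       (c + b * α) / 2;
          α * (a + α) / 2,  (c + b * α) / 2, c * α] : Matrix (Fin 3) (Fin 3) ℝ)
      = (1 / 4) * (α ^ 3 + a * α ^ 2 - b * α + c) ^ 2 := by
  simp [Matrix.det_fin_three]; ring
end

section
/- Let a, b, c ∈ ℝ with b < 0, c < 0 and Disc(P) := a²b² + 4b³ − 4a³c − 18abc − 27c² < 0, and let α_Q be the unique real root of Q(X) := X³ + aX² − bX + c. Then R(α_Q) := (1/4)(−a² − 4b + 2aα_Q + 3α_Q²) > 0. -/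
/-- If `b < 0`, `c < 0`, `Disc(P) = a²b² + 4b³ − 4a³c − 18abc − 27c² < 0` and `α_Q` is
the unique real root of `Q(X) = X³ + aX² − bX + c`, then
`R(α_Q) = (1/4)(−a² − 4b + 2aα_Q + 3α_Q²) > 0`. -/
theorem R_alphaQ_pos (a b c : ℝ) (hb : b < 0) (hc : c < 0)
    (hdisc : a ^ 2 * b ^ 2 + 4 * b ^ 3 - 4 * a ^ 3 * c - 18 * a * b * c - 27 * c ^ 2 < 0)
    (αQ : ℝ) (hroot : αQ ^ 3 + a * αQ ^ 2 - b * αQ + c = 0)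
    (huniq : ∀ β : ℝ, β ^ 3 + a * β ^ 2 - b * β + c = 0 → β = αQ) :
    0 < (1 / 4) * (-a ^ 2 - 4 * b + 2 * a * αQ + 3 * αQ ^ 2) := by
  by_contra hR
  push_neg at hR
  have hd0 : 0 ≤ (a + αQ) ^ 2 - 4 * (αQ ^ 2 + a * αQ - b) := by nlinarith
  obtain ⟨s, hs2⟩ : ∃ s : ℝ, s ^ 2 = (a + αQ) ^ 2 - 4 * (αQ ^ 2 + a * αQ - b) :=
    ⟨_, Real.sq_sqrt hd0⟩
  have h1 : ((-(a + αQ) + s) / 2) ^ 3 + a * ((-(a + αQ) + s) / 2) ^ 2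
      - b * ((-(a + αQ) + s) / 2) + c = 0 := by
    linear_combination ((((-(a + αQ) + s) / 2) - αQ) / 4) * hs2 + hroot
  have h2 : ((-(a + αQ) - s) / 2) ^ 3 + a * ((-(a + αQ) - s) / 2) ^ 2
      - b * ((-(a + αQ) - s) / 2) + c = 0 := by
    linear_combination ((((-(a + αQ) - s) / 2) - αQ) / 4) * hs2 + hroot
  have e1 := huniq _ h1
  have e2 := huniq _ h2
  have hs0 : s = 0 := by linarith
  subst hs0
  have ha : a = -3 * αQ := by linarith
  subst ha
  have hb3 : b = -3 * αQ ^ 2 := by linear_combination (-1 / 4) * hs2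
  subst hb3
  have hc3 : c = -αQ ^ 3 := by linear_combination hroot
  subst hc3
  nlinarith [hdisc]
end

section
/- Let a, b, c ∈ ℝ with b < 0, c < 0 and Disc(P) := a²b² + 4b³ − 4a³c − 18abc − 27c² < 0, let α_Q be the unique real root of Q(X) := X³ + aX² − bX + c, and define the quadratic form q(x,y,z) := −x² + (b−α_Q²)y² + cα_Q z² + (a−α_Q)xy + α_Q(a+α_Q)xz + (c+bα_Q)yz on ℝ³. Then q(x,y,z) < 0 for every (x,y,z) ∈ ℝ³ with x ≥ 0, y ≥ 0, z ≥ 0 and (x,y,z) ≠ (0,0,0). -/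
/-- If `b < 0`, `c < 0`, `Disc(P) = a²b² + 4b³ − 4a³c − 18abc − 27c² < 0` and `α_Q` is the
unique real root of `Q(X) = X³ + aX² − bX + c`, then the quadratic form
`q(x,y,z) = −x² + (b−α_Q²)y² + cα_Q z² + (a−α_Q)xy + α_Q(a+α_Q)xz + (c+bα_Q)yz`
is (strictly) negative on the nonnegative orthant minus the origin. -/
theorem q_neg_on_orthant (a b c : ℝ) (hb : b < 0) (hc : c < 0)
    (hdisc : a ^ 2 * b ^ 2 + 4 * b ^ 3 - 4 * a ^ 3 * c - 18 * a * b * c - 27 * c ^ 2 < 0)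
    (αQ : ℝ) (hroot : αQ ^ 3 + a * αQ ^ 2 - b * αQ + c = 0)
    (huniq : ∀ β : ℝ, β ^ 3 + a * β ^ 2 - b * β + c = 0 → β = αQ) :
    ∀ x y z : ℝ, 0 ≤ x → 0 ≤ y → 0 ≤ z → (x, y, z) ≠ (0, 0, 0) →
      -x ^ 2 + (b - αQ ^ 2) * y ^ 2 + c * αQ * z ^ 2 + (a - αQ) * x * y
          + αQ * (a + αQ) * x * z + (c + b * αQ) * y * z < 0 := by
  set s : ℝ := a + αQ with hs
  set t : ℝ := αQ ^ 2 + a * αQ - b with ht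
  set u : ℝ := 3 * αQ ^ 2 + 2 * a * αQ - b with hu
  -- discriminant factorization
  have hfact : a ^ 2 * b ^ 2 + 4 * b ^ 3 - 4 * a ^ 3 * c - 18 * a * b * c - 27 * c ^ 2
      = (s ^ 2 - 4 * t) * u ^ 2 := by
    rw [hs, ht, hu]
    linear_combination (27 * αQ ^ 3 - 27 * c - 27 * b * αQ + 27 * a * αQ ^ 2
      - 18 * a * b - 4 * a ^ 3) * hroot
  have hD : s ^ 2 - 4 * t < 0 := by
    rcases eq_or_ne u 0 with h0 | h0
    · rw [hfact, h0] at hdisc; simp at hdisc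
    · have hu2 : 0 < u ^ 2 := by positivity
      nlinarith [hfact]
  have htpos : 0 < t := by nlinarith [sq_nonneg s]
  have hceq : c = -αQ * t := by rw [ht]; linear_combination hroot
  have hαpos : 0 < αQ := by
    by_contra h
    push_neg at h
    nlinarith [mul_nonneg (neg_nonneg.mpr h) htpos.le]
  intro x y z hx hy hz hne
  -- key identity: 4q = -(2x-(a-αQ)y-αQ(a+αQ)z)² + (s²-4t)(y+αQz)²
  have key : 4 * (-x ^ 2 + (b - αQ ^ 2) * y ^ 2 + c * αQ * z ^ 2 + (a - αQ) * x * y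
        + αQ * s * x * z + (c + b * αQ) * y * z)
      = -(2 * x - (a - αQ) * y - αQ * s * z) ^ 2
        + (s ^ 2 - 4 * t) * (y + αQ * z) ^ 2 := by
    rw [hs, ht]
    linear_combination (4 * y * z + 4 * αQ * z ^ 2) * hroot
  rcases eq_or_lt_of_le (by positivity : (0:ℝ) ≤ y + αQ * z) with hyz | hyz
  · -- y + αQ z = 0, so y = z = 0, hence x > 0
    have hmz : 0 ≤ αQ * z := mul_nonneg hαpos.le hz
    have hy0 : y = 0 := by linarith
    have hz0 : z = 0 := by
      have h2 : αQ * z = 0 := by linarith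
      exact (mul_eq_zero.mp h2).resolve_left hαpos.ne'
    have hx0 : x ≠ 0 := by
      intro h; exact hne (by simp [h, hy0, hz0])
    have hx2 : 0 < x ^ 2 := by positivity
    rw [hy0, hz0]
    ring_nf
    linarith
  · have h1 : (s ^ 2 - 4 * t) * (y + αQ * z) ^ 2 < 0 :=
      mul_neg_of_neg_of_pos hD (by positivity)
    linarith [key, sq_nonneg (2 * x - (a - αQ) * y - αQ * s * z)]
end

section
/- Let P be a Markov transition kernel on ℕ³ and let (X_n)_{n≥0} denote the canonical chain with trajectory law P_x when started at X₀ = x. Let S₁, S₂, … be subsets of ℕ³ and 0 < m₁ < m₂ < ⋯ an increasing sequence of integers. Suppose: (1) almost surely on the event ⋂_{n≥1}{X_{m_n} ∈ S_n}, we have X_n ≠ (0,0,0) for all n ≥ 1; (2) P_{(0,0,0)}(X_{m₁} ∈ S₁) > 0, and for all n ≥ 1 and every x ∈ S_n, P_x(X_{m_{n+1}−m_n} ∈ S_{n+1}) > 0; (3) there exists a sequence (p_n)_{n≥1} with values in [0,1] and Σ_{n≥1}(1−p_n) < ∞ such that for all n ≥ 1 and all x ∈ S_n, P_x(X_{m_{n+1}−m_n}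 ∈ S_{n+1}) ≥ p_n. Then P_{(0,0,0)}(X_n ≠ (0,0,0) for all n ≥ 1) > 0. -/
/-!
Let `A_N` be the event that the chain is in `S_n` at time `m_n` for every `1 ≤ n ≤ N`. This event
is determined by the path up to time `m_N` and forces `X_{m_N} ∈ S_N`, so the Markov property at
time `m_N` gives `P(A_{N+1}) ≥ p_N P(A_N)`, and `P(A_{N+1}) > 0` whenever `P(A_N) > 0`. Since
`∏_{N₀ ≤ n < N} p_n ≥ 1 - ∑_{n ≥ N₀} (1 - p_n)`, which is positive for `N₀` large, the
probabilities `P(A_N)` stay bounded away from `0`, hence `⋂_N A_N` has positive probability; by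
hypothesis (1) the chain almost surely never returns to the origin on that event.
-/

open MeasureTheory Filter Function
open scoped ENNReal

theorem Finset.one_sub_sum_one_sub_le_prod {ι : Type*} (s : Finset ι) {f : ι → ℝ}
    (hf : ∀ i ∈ s, f i ∈ Set.Icc (0 : ℝ) 1) : 1 - ∑ i ∈ s, (1 - f i) ≤ ∏ i ∈ s, f i := by
  induction s using Finset.cons_induction with
  | empty => simp
  | cons a s ha ih =>
    rw [prod_cons, sum_cons]
    obtain ⟨h0, h1⟩ := hf a (mem_cons_self a s)
    have ih := ih fun i hi => hf i (mem_cons_of_mem hi)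
    have hsum : 0 ≤ ∑ i ∈ s, (1 - f i) :=
      sum_nonneg fun i hi => sub_nonneg.2 (hf i (mem_cons_of_mem hi)).2
    nlinarith [mul_le_mul_of_nonneg_left ih h0, mul_nonneg (sub_nonneg.2 h1) hsum]

theorem ofReal_prod_Ico_mul_le {a : ℕ → ℝ≥0∞} {p : ℕ → ℝ} (hp : ∀ n, 0 ≤ p n)
    {N₀ : ℕ} (hstep : ∀ n ≥ N₀, ENNReal.ofReal (p n) * a n ≤ a (n + 1)) {N : ℕ} (hN : N₀ ≤ N) :
    ENNReal.ofReal (∏ n ∈ Finset.Ico N₀ N, p n) * a N₀ ≤ a N := by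
  induction N, hN using Nat.le_induction with
  | base => simp
  | succ N hN ih =>
    rw [Finset.prod_Ico_succ_top hN, ENNReal.ofReal_mul (Finset.prod_nonneg fun n _ => hp n),
      mul_right_comm]
    calc _ ≤ a N * ENNReal.ofReal (p N) := by gcongr
      _ ≤ a (N + 1) := mul_comm (a N) _ ▸ hstep N hN

theorem exists_pos_eventually_le_of_mul_le {a : ℕ → ℝ≥0∞} {p : ℕ → ℝ}
    (hp : ∀ n, p n ∈ Set.Icc (0 : ℝ) 1) (hsum : Summable fun n => 1 - p n)
    (hpos : ∀ n ≥ 1, 0 < a n) (hstep : ∀ n ≥ 1, ENNReal.ofReal (p n) * a n ≤ a (n + 1)) :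
    ∃ c > 0, ∀ᶠ n in atTop, c ≤ a n := by
  obtain ⟨N₀, htail, hN₀⟩ : ∃ N₀, ∑' i, (1 - p (i + N₀)) < 1 ∧ 1 ≤ N₀ :=
    (((tendsto_sum_nat_add fun n => 1 - p n).eventually_lt_const one_pos).and
      (eventually_ge_atTop 1)).exists
  refine ⟨ENNReal.ofReal (1 - ∑' i, (1 - p (i + N₀))) * a N₀,
    ENNReal.mul_pos (ENNReal.ofReal_pos.2 (by linarith)).ne' (hpos N₀ hN₀).ne',
    eventually_atTop.2 ⟨N₀, fun N hN => ?_⟩⟩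
  have htail_le : ∑ n ∈ Finset.Ico N₀ N, (1 - p n) ≤ ∑' i, (1 - p (i + N₀)) := by
    rw [Finset.sum_Ico_eq_sum_range]
    simp_rw [add_comm N₀]
    exact ((summable_nat_add_iff N₀).2 hsum).sum_le_tsum _ fun i _ => sub_nonneg.2 (hp _).2
  calc _ ≤ ENNReal.ofReal (∏ n ∈ Finset.Ico N₀ N, p n) * a N₀ := by
        gcongr
        linarith [(Finset.Ico N₀ N).one_sub_sum_one_sub_le_prod fun n _ => hp n]
    _ ≤ a N := ofReal_prod_Ico_mul_le (fun n => (hp n).1)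
        (fun n hn => hstep n (hN₀.trans hn)) hN

theorem MeasureTheory.measure_iInter_pos_of_mul_le {β : Type*} [MeasurableSpace β]
    {ν : Measure β} [IsFiniteMeasure ν] {A : ℕ → Set β} (hA : ∀ n, MeasurableSet (A n))
    (hanti : Antitone A) {p : ℕ → ℝ} (hp : ∀ n, p n ∈ Set.Icc (0 : ℝ) 1)
    (hsum : Summable fun n => 1 - p n) (hpos : ∀ n ≥ 1, 0 < ν (A n))
    (hstep : ∀ n ≥ 1, ENNReal.ofReal (p n) * ν (A n) ≤ ν (A (n + 1))) :
    0 < ν (⋂ n, A n) := by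
  obtain ⟨c, hc, hle⟩ := exists_pos_eventually_le_of_mul_le hp hsum hpos hstep
  exact hc.trans_le <| ge_of_tendsto (tendsto_measure_iInter_atTop
    (fun n => (hA n).nullMeasurableSet) hanti ⟨0, measure_ne_top _ _⟩) hle

namespace MarkovChain

variable {α : Type*}

def pathCylinder (s : ℕ → α) (t : ℕ) : Set (ℕ → α) := {ω | ∀ i ≤ t, ω i = s i}

theorem mem_pathCylinder_update {ω s : ℕ → α} {t : ℕ} {z : α} :
    ω ∈ pathCylinder (update s (t + 1) z) (t + 1) ↔
      ω ∈ pathCylinder s t ∧ ω (t + 1) = z := by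
  simp only [pathCylinder, Set.mem_ofPred_eq, Nat.le_succ_iff (n := t), or_imp, forall_and,
    forall_eq, update_self]
  refine and_congr_left fun _ => forall₂_congr fun i hi => ?_
  rw [update_of_ne (by omega)]

theorem pathCylinder_eq_iUnion_update (s : ℕ → α) (t : ℕ) :
    pathCylinder s t = ⋃ z, pathCylinder (update s (t + 1) z) (t + 1) := by
  ext ω
  simp only [Set.mem_iUnion, mem_pathCylinder_update, exists_and_left, exists_eq', and_true]

theorem pairwise_disjoint_pathCylinder_update (s : ℕ → α) (t : ℕ) :
    Pairwise (Disjoint on fun z => pathCylinder (update s (t + 1) z) (t + 1)) :=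
  fun _ _ hne => Set.disjoint_left.2 fun _ h h' =>
    hne ((mem_pathCylinder_update.1 h).2.symm.trans (mem_pathCylinder_update.1 h').2)

def IsDeterminedUpTo (t : ℕ) (D : Set (ℕ → α)) : Prop :=
  ∀ ω ω', (∀ i ≤ t, ω i = ω' i) → ω ∈ D → ω' ∈ D

def restrictPrefix (t : ℕ) (ω : ℕ → α) : Fin (t + 1) → α := fun j => ω j

def padPrefix (t : ℕ) (v : Fin (t + 1) → α) : ℕ → α := fun i => v ⟨min i t, by omega⟩

theorem pathCylinder_padPrefix (t : ℕ) (v : Fin (t + 1) → α) :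
    pathCylinder (padPrefix t v) t = restrictPrefix t ⁻¹' {v} := by
  ext ω
  simp only [pathCylinder, padPrefix, Set.mem_ofPred_eq, Set.mem_preimage, Set.mem_singleton_iff,
    funext_iff, restrictPrefix, Fin.forall_iff]
  refine forall_congr' fun i => ⟨fun h hi => ?_, fun h hi => ?_⟩
  · simpa [Nat.min_eq_left (Nat.lt_succ_iff.mp hi)] using h (Nat.lt_succ_iff.mp hi)
  · simpa [Nat.min_eq_left hi] using h (Nat.lt_succ_iff.mpr hi)

theorem IsDeterminedUpTo.preimage_restrictPrefix {t : ℕ} {D : Set (ℕ → α)}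
    (hD : IsDeterminedUpTo t D) : restrictPrefix t ⁻¹' {v | padPrefix t v ∈ D} = D := by
  ext ω
  have hagree : ∀ i ≤ t, padPrefix t (restrictPrefix t ω) i = ω i := fun i hi => by
    simp [padPrefix, restrictPrefix, Nat.min_eq_left hi]
  exact ⟨hD _ _ hagree, hD _ _ fun i hi => (hagree i hi).symm⟩

section Measure

variable [MeasurableSpace α]

theorem measurable_restrictPrefix (t : ℕ) : Measurable (restrictPrefix (α := α) t) :=
  measurable_pi_lambda _ fun _ => measurable_pi_apply _

def HasCylinderLaw [DecidableEq α] (P : α → α → ℝ) (μ : α → Measure (ℕ → α)) : Prop :=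
  ∀ (x : α) (n : ℕ) (s : ℕ → α), (μ x (pathCylinder s n)).toReal
    = (if s 0 = x then 1 else 0) * ∏ i ∈ Finset.range n, P (s i) (s (i + 1))

section CylinderFormula

variable [DecidableEq α] {P : α → α → ℝ} {μ : α → Measure (ℕ → α)}

theorem HasCylinderLaw.measure_pathCylinder_const (hμ : HasCylinderLaw P μ) (x : α) :
    μ x (pathCylinder (fun _ => x) 0) = 1 := by
  simpa [ENNReal.toReal_eq_one_iff] using hμ x 0 fun _ => x

theorem HasCylinderLaw.measure_pathCylinder_update [∀ x, IsProbabilityMeasure (μ x)]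
    (hμ : HasCylinderLaw P μ) (x : α) (s : ℕ → α) (t : ℕ) (z : α) :
    μ x (pathCylinder (update s (t + 1) z) (t + 1))
      = μ x (pathCylinder s t) * ENNReal.ofReal (P (s t) z) := by
  have hprefix : ∀ i ≤ t, update s (t + 1) z i = s i := fun i hi => update_of_ne (by omega) _ _
  have hreal : (μ x (pathCylinder (update s (t + 1) z) (t + 1))).toReal
      = (μ x (pathCylinder s t)).toReal * P (s t) z := by
    rw [hμ, hμ, Finset.prod_range_succ, update_self, hprefix 0 (Nat.zero_le _), hprefix t le_rfl,
      Finset.prod_congr rfl fun i hi => by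
        rw [hprefix i (by simp at hi; omega), hprefix (i + 1) (by simp at hi; omega)], mul_assoc]
  rw [← ENNReal.ofReal_toReal (measure_ne_top _ _), hreal,
    ENNReal.ofReal_mul ENNReal.toReal_nonneg, ENNReal.ofReal_toReal (measure_ne_top _ _)]

end CylinderFormula

variable [MeasurableSingletonClass α]

theorem measurableSet_pathCylinder (s : ℕ → α) (t : ℕ) : MeasurableSet (pathCylinder s t) := by
  have : pathCylinder s t = ⋂ i ∈ Finset.range (t + 1), (fun ω : ℕ → α => ω i) ⁻¹' {s i} := by
    ext ω
    simp [pathCylinder]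
  rw [this]
  exact Finset.measurableSet_biInter _ fun i _ => measurable_pi_apply i (measurableSet_singleton _)

section InitialState

variable [DecidableEq α] {P : α → α → ℝ} {μ : α → Measure (ℕ → α)}
  [∀ x, IsProbabilityMeasure (μ x)]

theorem HasCylinderLaw.measure_pathCylinder_const_inter (hμ : HasCylinderLaw P μ) (x : α)
    (E : Set (ℕ → α)) : μ x (pathCylinder (fun _ => x) 0 ∩ E) = μ x E := by
  rw [Set.inter_comm]
  exact measure_inter_conull <| by
    rw [prob_compl_eq_zero_iff (measurableSet_pathCylinder _ _), hμ.measure_pathCylinder_const]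

theorem HasCylinderLaw.measure_eval_zero_mem (hμ : HasCylinderLaw P μ) (x : α) (T : Set α) :
    μ x {ω | ω 0 ∈ T} = T.indicator 1 x := by
  rw [← hμ.measure_pathCylinder_const_inter]
  by_cases hx : x ∈ T
  · rw [Set.indicator_of_mem hx, Set.inter_eq_left.2 fun ω hω => by simp [hω 0 le_rfl, hx],
      Pi.one_apply, hμ.measure_pathCylinder_const]
  · rw [Set.indicator_of_notMem hx, Set.eq_empty_of_forall_notMem
      (s := pathCylinder (fun _ => x) 0 ∩ {ω | ω 0 ∈ T}) fun ω hω => hx (by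
        simpa [hω.1 0 le_rfl] using hω.2), measure_empty]

end InitialState

variable [Countable α]

theorem measurableSet_eval_mem (j : ℕ) (T : Set α) : MeasurableSet {ω : ℕ → α | ω j ∈ T} :=
  measurable_pi_apply j (Set.to_countable T).measurableSet

theorem measure_inter_eq_tsum_pathCylinder (ν : Measure (ℕ → α)) {t : ℕ} {D E : Set (ℕ → α)}
    (hD : IsDeterminedUpTo t D) (hE : MeasurableSet E) :
    ν (D ∩ E) = ∑' v : {v : Fin (t + 1) → α | padPrefix t v ∈ D},
      ν (pathCylinder (padPrefix t v) t ∩ E) := by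
  simp_rw [pathCylinder_padPrefix, ← Measure.restrict_apply' hE]
  rw [tsum_measure_preimage_singleton (Set.to_countable _)
    fun v _ => measurable_restrictPrefix t (measurableSet_singleton v), hD.preimage_restrictPrefix]

theorem measure_eq_tsum_pathCylinder (ν : Measure (ℕ → α)) {t : ℕ} {D : Set (ℕ → α)}
    (hD : IsDeterminedUpTo t D) :
    ν D = ∑' v : {v : Fin (t + 1) → α | padPrefix t v ∈ D},
      ν (pathCylinder (padPrefix t v) t) := by
  simpa using measure_inter_eq_tsum_pathCylinder ν hD MeasurableSet.univ

section Markov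

variable [DecidableEq α] {P : α → α → ℝ} {μ : α → Measure (ℕ → α)}
  [∀ x, IsProbabilityMeasure (μ x)]

theorem HasCylinderLaw.measure_pathCylinder_inter_eval (hμ : HasCylinderLaw P μ) (T : Set α)
    (k : ℕ) (x : α) (s : ℕ → α) (t : ℕ) : μ x (pathCylinder s t ∩ {ω | ω (t + k) ∈ T})
      = μ x (pathCylinder s t) * μ (s t) {ω | ω k ∈ T} := by
  induction k generalizing x s t with
  | zero =>
    rw [hμ.measure_eval_zero_mem]
    by_cases hT : s t ∈ T
    · rw [Set.indicator_of_mem hT, Pi.one_apply, mul_one,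
        Set.inter_eq_left.2 fun ω hω => by simp [hω t le_rfl, hT]]
    · rw [Set.indicator_of_notMem hT, mul_zero,
        Set.eq_empty_of_forall_notMem (s := pathCylinder s t ∩ {ω | ω (t + 0) ∈ T}) fun ω hω =>
          hT (by simpa [hω.1 t le_rfl] using hω.2),
        measure_empty]
  | succ k ih =>
    have hsplit : ∀ x s t, μ x (pathCylinder s t ∩ {ω | ω (t + (k + 1)) ∈ T})
        = μ x (pathCylinder s t) * ∑' z, ENNReal.ofReal (P (s t) z) * μ z {ω | ω k ∈ T} := by
      intro x s t
      conv_lhs => rw [pathCylinder_eq_iUnion_update s t, Set.iUnion_inter]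
      rw [measure_iUnion (fun _ _ h => ((pairwise_disjoint_pathCylinder_update s t) h).mono
          Set.inter_subset_left Set.inter_subset_left)
          (fun _ => (measurableSet_pathCylinder _ _).inter (measurableSet_eval_mem _ _)),
        ← ENNReal.tsum_mul_left]
      refine tsum_congr fun z => ?_
      rw [show t + (k + 1) = t + 1 + k by omega, ih, hμ.measure_pathCylinder_update, update_self,
        mul_assoc]
    -- at `t = 0` the cylinder `{ω 0 = y}` is conull for `μ y`, so `hsplit` becomes the
    -- first-step decomposition of `μ y {ω | ω (k + 1) ∈ T}`
    have hstart : ∀ y, μ y {ω | ω (k + 1) ∈ T}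
        = ∑' z, ENNReal.ofReal (P y z) * μ z {ω | ω k ∈ T} := fun y => by
      simpa [hμ.measure_pathCylinder_const_inter, hμ.measure_pathCylinder_const]
        using hsplit y (fun _ => y) 0
    rw [hsplit, hstart]

theorem HasCylinderLaw.measure_inter_eval_eq_tsum (hμ : HasCylinderLaw P μ) {t : ℕ}
    {D : Set (ℕ → α)} (hD : IsDeterminedUpTo t D) (x : α) (k : ℕ) (T : Set α) :
    μ x (D ∩ {ω | ω (t + k) ∈ T}) = ∑' v : {v : Fin (t + 1) → α | padPrefix t v ∈ D},
      μ x (pathCylinder (padPrefix t v) t) * μ (padPrefix t v t) {ω | ω k ∈ T} := by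
  rw [measure_inter_eq_tsum_pathCylinder _ hD (measurableSet_eval_mem _ _)]
  exact tsum_congr fun v => hμ.measure_pathCylinder_inter_eval T k x _ t

variable {t k : ℕ} {D : Set (ℕ → α)} {U T : Set α}

theorem HasCylinderLaw.mul_measure_le_measure_inter_eval (hμ : HasCylinderLaw P μ)
    (hD : IsDeterminedUpTo t D) (hU : ∀ ω ∈ D, ω t ∈ U) {c : ℝ≥0∞}
    (hc : ∀ y ∈ U, c ≤ μ y {ω | ω k ∈ T}) (x : α) :
    c * μ x D ≤ μ x (D ∩ {ω | ω (t + k) ∈ T}) := by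
  rw [hμ.measure_inter_eval_eq_tsum hD, measure_eq_tsum_pathCylinder _ hD,
    ← ENNReal.tsum_mul_left]
  refine ENNReal.tsum_le_tsum fun v => ?_
  rw [mul_comm]
  gcongr
  exact hc _ (hU _ v.2)

theorem HasCylinderLaw.measure_inter_eval_pos (hμ : HasCylinderLaw P μ)
    (hD : IsDeterminedUpTo t D) (hU : ∀ ω ∈ D, ω t ∈ U)
    (hpos : ∀ y ∈ U, 0 < μ y {ω | ω k ∈ T}) {x : α} (hx : 0 < μ x D) :
    0 < μ x (D ∩ {ω | ω (t + k) ∈ T}) := by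
  rw [measure_eq_tsum_pathCylinder _ hD] at hx
  obtain ⟨v, hv⟩ := not_forall.1 (ENNReal.tsum_eq_zero.not.1 hx.ne')
  rw [hμ.measure_inter_eval_eq_tsum hD]
  exact (ENNReal.mul_pos hv (hpos _ (hU _ v.2)).ne').trans_le (ENNReal.le_tsum v)

end Markov

end Measure

section Visits

variable {S : ℕ → Set α} {m : ℕ → ℕ}

def visitsUpTo (S : ℕ → Set α) (m : ℕ → ℕ) (N : ℕ) : Set (ℕ → α) :=
  {ω | ∀ n, 1 ≤ n → n ≤ N → ω (m n) ∈ S n}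

theorem antitone_visitsUpTo : Antitone (visitsUpTo S m) :=
  fun _ _ hNN' _ hω n hn hnN => hω n hn (hnN.trans hNN')

theorem iInter_visitsUpTo : ⋂ N, visitsUpTo S m N = {ω | ∀ n ≥ 1, ω (m n) ∈ S n} := by
  ext ω
  simp only [visitsUpTo, Set.mem_iInter, Set.mem_ofPred_eq]
  exact ⟨fun h n hn => h n n hn le_rfl, fun h _ n hn _ => h n hn⟩

theorem visitsUpTo_one : visitsUpTo S m 1 = {ω | ω (m 1) ∈ S 1} := by
  ext ω
  refine ⟨fun h => h 1 le_rfl le_rfl, fun h n hn hn' => ?_⟩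
  obtain rfl : n = 1 := le_antisymm hn' hn
  exact h

theorem isDeterminedUpTo_visitsUpTo (hm : ∀ n ≥ 1, m n < m (n + 1)) (N : ℕ) :
    IsDeterminedUpTo (m N) (visitsUpTo S m N) :=
  fun ω ω' hagree hω n hn hnN => by
    rw [← hagree _ ((monotoneOn_nat_Ici_of_le_succ fun k hk => (hm k hk).le) hn
      (hn.trans hnN) hnN)]
    exact hω n hn hnN

theorem visitsUpTo_succ (hm : ∀ n ≥ 1, m n < m (n + 1)) {N : ℕ} (hN : 1 ≤ N) :
    visitsUpTo S m (N + 1)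
      = visitsUpTo S m N ∩ {ω | ω (m N + (m (N + 1) - m N)) ∈ S (N + 1)} := by
  rw [Nat.add_sub_cancel' (hm N hN).le]
  ext ω
  refine ⟨fun h => ⟨fun n hn hnN => h n hn (by omega), h _ (by omega) le_rfl⟩, ?_⟩
  rintro ⟨h, hlast⟩ n hn hnN
  rcases Nat.lt_succ_iff_lt_or_eq.1 (Nat.lt_succ_of_le hnN) with hlt | rfl
  · exact h n hn (by omega)
  · exact hlast

theorem measurableSet_visitsUpTo [MeasurableSpace α] [MeasurableSingletonClass α] [Countable α]
    (N : ℕ) : MeasurableSet (visitsUpTo S m N) := by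
  simp only [visitsUpTo, Set.ofPred_forall]
  exact .iInter fun n => .iInter fun _ => .iInter fun _ => measurableSet_eval_mem _ _

end Visits

end MarkovChain

open MarkovChain

theorem transience_criterion_general
    (P : ℕ × ℕ × ℕ → ℕ × ℕ × ℕ → ℝ)
    (μ : ℕ × ℕ × ℕ → Measure (ℕ → ℕ × ℕ × ℕ))
    (hprob : ∀ x, IsProbabilityMeasure (μ x))
    (hcyl : ∀ (x : ℕ × ℕ × ℕ) (n : ℕ) (s : ℕ → ℕ × ℕ × ℕ),
      (μ x {ω | ∀ i ≤ n, ω i = s i}).toReal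
        = (if s 0 = x then 1 else 0) * ∏ i ∈ Finset.range n, P (s i) (s (i + 1)))
    (S : ℕ → Set (ℕ × ℕ × ℕ)) (m : ℕ → ℕ)
    (hmono : ∀ n ≥ 1, m n < m (n + 1))
    (h1 : μ (0, 0, 0)
      {ω | (∀ n ≥ 1, ω (m n) ∈ S n) ∧ ∃ n ≥ 1, ω n = (0, 0, 0)} = 0)
    (h2a : 0 < μ (0, 0, 0) {ω | ω (m 1) ∈ S 1})
    (h2b : ∀ n ≥ 1, ∀ x ∈ S n,
      0 < μ x {ω | ω (m (n + 1) - m n) ∈ S (n + 1)})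
    (h3 : ∃ p : ℕ → ℝ, (∀ n, p n ∈ Set.Icc (0 : ℝ) 1)
      ∧ Summable (fun n => 1 - p n)
      ∧ ∀ n ≥ 1, ∀ x ∈ S n,
          ENNReal.ofReal (p n) ≤ μ x {ω | ω (m (n + 1) - m n) ∈ S (n + 1)}) :
    0 < μ (0, 0, 0) {ω | ∀ n ≥ 1, ω n ≠ (0, 0, 0)} := by
  obtain ⟨p, hp, hsum, hp_le⟩ := h3
  have hμ : HasCylinderLaw P μ := hcyl
  have hlast : ∀ N ≥ 1, ∀ ω ∈ visitsUpTo S m N, ω (m N) ∈ S N := fun N hN ω hω => hω N hN le_rfl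
  have hpos : ∀ N ≥ 1, 0 < μ (0, 0, 0) (visitsUpTo S m N) := fun N hN => by
    induction N, hN using Nat.le_induction with
    | base => rwa [visitsUpTo_one]
    | succ N hN ih =>
      rw [visitsUpTo_succ hmono hN]
      exact hμ.measure_inter_eval_pos (isDeterminedUpTo_visitsUpTo hmono N) (hlast N hN)
        (h2b N hN) ih
  have hstep : ∀ N ≥ 1, ENNReal.ofReal (p N) * μ (0, 0, 0) (visitsUpTo S m N)
      ≤ μ (0, 0, 0) (visitsUpTo S m (N + 1)) := fun N hN => by
    rw [visitsUpTo_succ hmono hN]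
    exact hμ.mul_measure_le_measure_inter_eval (isDeterminedUpTo_visitsUpTo hmono N)
      (hlast N hN) (hp_le N hN) _
  have hvisits := measure_iInter_pos_of_mul_le measurableSet_visitsUpTo antitone_visitsUpTo
    hp hsum hpos hstep
  refine hvisits.trans_le (measure_mono_ae (ae_le_set.2 ?_))
  rw [iInter_visitsUpTo, ← h1]
  congr 1
  ext ω
  simp

/-- Abstract transience criterion for a Markov chain on `ℕ³`. Here `P` is a Markov
transition kernel on `ℕ³` and `μ x` is the trajectory law of the canonical chain
`(X_n)_{n≥0} = (ω n)_{n≥0}` started at `x`, characterized by the cylinder formula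
(Ionescu-Tulcea construction):
`P_x(X_0 = s_0, …, X_n = s_n) = 1_{s_0 = x} ∏_{i<n} P(s_i, s_{i+1})`.
Given subsets `S₁, S₂, …` of `ℕ³` and integers `0 < m₁ < m₂ < ⋯` such that
(1) almost surely on `⋂_{n≥1} {X_{m_n} ∈ S_n}` the chain never returns to `(0,0,0)`,
(2) `P_{(0,0,0)}(X_{m₁} ∈ S₁) > 0` and from any `x ∈ S_n` the event
`{X_{m_{n+1}−m_n} ∈ S_{n+1}}` has positive probability, and
(3) this probability is at least `p_n` with `Σ (1−p_n) < ∞`,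
the chain started at `(0,0,0)` never returns to `(0,0,0)` with positive probability. -/
theorem transience_criterion
    (P : ℕ × ℕ × ℕ → ℕ × ℕ × ℕ → ℝ)
    (hPnonneg : ∀ x y, 0 ≤ P x y)
    (hPsum : ∀ x, ∑' y, P x y = 1)
    (μ : ℕ × ℕ × ℕ → Measure (ℕ → ℕ × ℕ × ℕ))
    (hprob : ∀ x, IsProbabilityMeasure (μ x))
    (hcyl : ∀ (x : ℕ × ℕ × ℕ) (n : ℕ) (s : ℕ → ℕ × ℕ × ℕ),
      (μ x {ω | ∀ i ≤ n, ω i = s i}).toReal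
        = (if s 0 = x then 1 else 0) * ∏ i ∈ Finset.range n, P (s i) (s (i + 1)))
    (S : ℕ → Set (ℕ × ℕ × ℕ)) (m : ℕ → ℕ)
    (hm1 : 0 < m 1) (hmono : ∀ n ≥ 1, m n < m (n + 1))
    (h1 : μ (0, 0, 0)
      {ω | (∀ n ≥ 1, ω (m n) ∈ S n) ∧ ∃ n ≥ 1, ω n = (0, 0, 0)} = 0)
    (h2a : 0 < μ (0, 0, 0) {ω | ω (m 1) ∈ S 1})
    (h2b : ∀ n ≥ 1, ∀ x ∈ S n,
      0 < μ x {ω | ω (m (n + 1) - m n) ∈ S (n + 1)})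
    (h3 : ∃ p : ℕ → ℝ, (∀ n, p n ∈ Set.Icc (0 : ℝ) 1)
      ∧ Summable (fun n => 1 - p n)
      ∧ ∀ n ≥ 1, ∀ x ∈ S n,
          ENNReal.ofReal (p n) ≤ μ x {ω | ω (m (n + 1) - m n) ∈ S (n + 1)}) :
    0 < μ (0, 0, 0) {ω | ∀ n ≥ 1, ω n ≠ (0, 0, 0)} :=
  transience_criterion_general P μ hprob hcyl S m hmono h1 h2a h2b h3
end

section
/- Let a, b, c ∈ ℝ and λ > 0 with b > 1 and ab + c < 0. Then the discrete-time Hawkes chain with memory 3 and parameters (a,b,c,λ), started at (0,0,0), never returns to (0,0,0) with positive probability: denoting by P_{(0,0,0)} the trajectory law of the chain started at X₀ = (0,0,0), one has P_{(0,0,0)}(X_n ≠ (0,0,0) for all n ≥ 1) > 0; in particular the chain is transient. -/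
open scoped BigOperators
open Classical MeasureTheory
set_option maxHeartbeats 1000000

namespace H3aux

lemma pois_nonneg {s : ℝ} (hs : 0 ≤ s) (k : ℕ) : 0 ≤ poissonPMF s k := by
  unfold poissonPMF; positivity

lemma tsum_exp (x : ℝ) : ∑' n : ℕ, x ^ n / (Nat.factorial n) = Real.exp x := by
  rw [Real.exp_eq_exp_ℝ, NormedSpace.exp_eq_tsum_div]


lemma summable_pois (s : ℝ) : Summable (fun k => poissonPMF s k) := by
  have : (fun k => poissonPMF s k) = (fun k => Real.exp (-s) * (s ^ k / (Nat.factorial k))) := by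
    funext k; unfold poissonPMF; ring
  rw [this]
  exact (Real.summable_pow_div_factorial s).mul_left _

lemma tsum_pois (s : ℝ) : ∑' k : ℕ, poissonPMF s k = 1 := by
  have : (fun k : ℕ => poissonPMF s k) = (fun k : ℕ => Real.exp (-s) * (s ^ k / (Nat.factorial k))) := by
    funext k; unfold poissonPMF; ring
  rw [this, tsum_mul_left, tsum_exp, ← Real.exp_add]
  simp

lemma tail_aux (s u t : ℝ) (hs : 0 ≤ s) (cond : ℕ → Prop)
    (hcond : ∀ k : ℕ, cond k → 0 ≤ t * k - t * u) :
    ∑' k : ℕ, (if cond k then poissonPMF s k else 0)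
      ≤ Real.exp (s * Real.exp t - s - t * u) := by
  have hterm : ∀ k : ℕ, (if cond k then poissonPMF s k else 0)
      ≤ Real.exp (-s - t * u) * ((s * Real.exp t) ^ k / (Nat.factorial k)) := by
    intro k
    have hrhs : Real.exp (-s - t * u) * ((s * Real.exp t) ^ k / (Nat.factorial k))
        = poissonPMF s k * Real.exp (t * k - t * u) := by
      unfold poissonPMF
      calc Real.exp (-s - t * u) * ((s * Real.exp t) ^ k / (Nat.factorial k))
          = (Real.exp (-s - t * u) * Real.exp ((k : ℝ) * t)) * (s ^ k / (Nat.factorial k)) := by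
            rw [mul_pow, ← Real.exp_nat_mul]; ring
        _ = (Real.exp (-s) * Real.exp (t * k - t * u)) * (s ^ k / (Nat.factorial k)) := by
            rw [← Real.exp_add, ← Real.exp_add]; ring_nf
        _ = Real.exp (-s) * s ^ k / (Nat.factorial k) * Real.exp (t * k - t * u) := by ring
    rw [hrhs]
    by_cases h : cond k
    · simp only [h, if_true]
      exact le_mul_of_one_le_right (pois_nonneg hs k)
        (Real.one_le_exp (hcond k h))
    · simp only [h, if_false]
      exact mul_nonneg (pois_nonneg hs k) (Real.exp_nonneg _)
  have hsum : Summable (fun k : ℕ => Real.exp (-s - t * u) * ((s * Real.exp t) ^ k / (Nat.factorial k))) :=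
    (Real.summable_pow_div_factorial _).mul_left _
  calc ∑' k : ℕ, (if cond k then poissonPMF s k else 0)
      ≤ ∑' k : ℕ, Real.exp (-s - t * u) * ((s * Real.exp t) ^ k / (Nat.factorial k)) := by
        refine Summable.tsum_le_tsum hterm ?_ hsum
        refine Summable.of_nonneg_of_le (fun k => ?_) hterm hsum
        by_cases h : cond k
        · simp only [h, if_true]; exact pois_nonneg hs k
        · simp [h]
    _ = Real.exp (-s - t * u) * Real.exp (s * Real.exp t) := by
        rw [tsum_mul_left, tsum_exp]
    _ = Real.exp (s * Real.exp t - s - t * u) := by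
        rw [← Real.exp_add]; ring_nf


noncomputable def Im (α β : ℝ) (m : ℕ) : Finset ℕ :=
  (Finset.range (Nat.ceil (β * m) + 1)).filter (fun ℓ => α * m < (ℓ : ℝ) ∧ (ℓ : ℝ) < β * m)

lemma mem_Im {α β : ℝ} {m ℓ : ℕ} :
    ℓ ∈ Im α β m ↔ α * m < (ℓ : ℝ) ∧ (ℓ : ℝ) < β * m := by
  simp only [Im, Finset.mem_filter, Finset.mem_range]
  constructor
  · exact fun h => h.2
  · intro h
    refine ⟨?_, h⟩
    have h1 : (ℓ : ℝ) ≤ (Nat.ceil (β * m) : ℝ) := le_trans h.2.le (Nat.le_ceil _)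
    have : ℓ ≤ Nat.ceil (β * m) := by exact_mod_cast h1
    omega

lemma one_le_sum_add_tails (s α β : ℝ) (hs : 0 ≤ s) (m : ℕ) :
    1 ≤ (∑ ℓ ∈ Im α β m, poissonPMF s ℓ)
        + ((∑' k : ℕ, if (k : ℝ) ≤ α * m then poissonPMF s k else 0)
        + (∑' k : ℕ, if β * m ≤ (k : ℝ) then poissonPMF s k else 0)) := by
  have hsum : Summable (fun k => poissonPMF s k) := summable_pois s
  have hs1 : Summable (fun k : ℕ => if k ∈ Im α β m then poissonPMF s k else 0) := by
    refine Summable.of_nonneg_of_le (fun k => ?_) (fun k => ?_) hsum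
    · by_cases h : k ∈ Im α β m <;> simp [h, pois_nonneg hs]
    · by_cases h : k ∈ Im α β m <;> simp [h, pois_nonneg hs]
  have hs2 : Summable (fun k : ℕ => if (k : ℝ) ≤ α * m then poissonPMF s k else 0) := by
    refine Summable.of_nonneg_of_le (fun k => ?_) (fun k => ?_) hsum
    · by_cases h : (k : ℝ) ≤ α * m <;> simp [h, pois_nonneg hs]
    · by_cases h : (k : ℝ) ≤ α * m <;> simp [h, pois_nonneg hs]
  have hs3 : Summable (fun k : ℕ => if β * m ≤ (k : ℝ) then poissonPMF s k else 0) := by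
    refine Summable.of_nonneg_of_le (fun k => ?_) (fun k => ?_) hsum
    · by_cases h : β * m ≤ (k : ℝ) <;> simp [h, pois_nonneg hs]
    · by_cases h : β * m ≤ (k : ℝ) <;> simp [h, pois_nonneg hs]
  have key : ∑' k : ℕ, poissonPMF s k
      ≤ ∑' k : ℕ, ((if k ∈ Im α β m then poissonPMF s k else 0)
          + ((if (k : ℝ) ≤ α * m then poissonPMF s k else 0)
          + (if β * m ≤ (k : ℝ) then poissonPMF s k else 0))) := by
    refine Summable.tsum_le_tsum (fun k => ?_) hsum (hs1.add (hs2.add hs3))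
    by_cases h1 : (k : ℝ) ≤ α * m
    · have := pois_nonneg hs k
      by_cases h2 : k ∈ Im α β m <;> by_cases h3 : β * m ≤ (k : ℝ) <;>
        simp [h1, h2, h3] <;> linarith
    · by_cases h3 : β * m ≤ (k : ℝ)
      · have := pois_nonneg hs k
        by_cases h2 : k ∈ Im α β m <;> simp [h1, h2, h3] <;> linarith
      · have h2 : k ∈ Im α β m := mem_Im.mpr ⟨lt_of_not_ge h1, lt_of_not_ge h3⟩
        simp [h1, h2, h3]
  rw [tsum_pois] at key
  rw [Summable.tsum_add hs1 (hs2.add hs3), Summable.tsum_add hs2 hs3] at key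
  have : ∑' k : ℕ, (if k ∈ Im α β m then poissonPMF s k else 0)
      = ∑ ℓ ∈ Im α β m, poissonPMF s ℓ := by
    rw [tsum_eq_sum (s := Im α β m) (fun k hk => by simp [hk])]
    exact Finset.sum_congr rfl (fun k hk => by simp [hk])
  linarith [key, this.symm.le]

lemma exists_setup (a b c lam : ℝ) (hlam : 0 < lam) (hb : 1 < b) (habc : a * b + c < 0) :
    ∃ (α β κ : ℝ) (M : ℕ), 1 < α ∧ 0 < κ ∧ 1 ≤ M ∧
      (∀ m ℓ : ℕ, M ≤ m → α * m < (ℓ : ℝ) → (ℓ : ℝ) < β * m → a * ℓ + c * m + lam ≤ 0) ∧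
      (∀ m : ℕ, M ≤ m →
        1 - 2 * Real.exp (-(κ * m)) ≤ ∑ ℓ ∈ Im α β m, poissonPMF (b * m + lam) ℓ) ∧
      (∀ m : ℕ, M ≤ m → 2 * Real.exp (-(κ * (α * m))) ≤ Real.exp (-(κ * m))) ∧
      (∀ m : ℕ, M ≤ m → Real.exp (-(κ * m)) ≤ 1 / 8) := by
  have hb0 : 0 < b := by linarith
  obtain ⟨δ, hδ, hδeq⟩ : ∃ δ : ℝ, 0 < δ ∧ a * b + c = -δ := ⟨-(a * b + c), by linarith, by ring⟩
  have ha1 : (0:ℝ) < |a| + 1 := by positivity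
  obtain ⟨ε, hε, hεb, hεδ⟩ : ∃ ε : ℝ, 0 < ε ∧ ε ≤ (b - 1) / 2 ∧ ε * (2 * (|a| + 1)) ≤ δ := by
    refine ⟨min ((b - 1) / 2) (δ / (2 * (|a| + 1))), lt_min (by linarith) (by positivity),
      min_le_left _ _, ?_⟩
    have h := min_le_right ((b - 1) / 2) (δ / (2 * (|a| + 1)))
    calc min ((b - 1) / 2) (δ / (2 * (|a| + 1))) * (2 * (|a| + 1))
        ≤ δ / (2 * (|a| + 1)) * (2 * (|a| + 1)) := by
          apply mul_le_mul_of_nonneg_right h; positivity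
      _ = δ := div_mul_cancel₀ _ (by positivity)
  obtain ⟨t, ht, ht2, htb⟩ : ∃ t : ℝ, 0 < t ∧ t ≤ 1 / 2 ∧ 4 * b * t ≤ ε := by
    refine ⟨min (ε / (4 * b)) (1 / 2), lt_min (by positivity) (by norm_num),
      min_le_right _ _, ?_⟩
    have h := min_le_left (ε / (4 * b)) (1 / 2)
    calc 4 * b * min (ε / (4 * b)) (1 / 2) ≤ 4 * b * (ε / (4 * b)) := by
          apply mul_le_mul_of_nonneg_left h; positivity
      _ = ε := by field_simp
  obtain ⟨κ, hκ, hκeq⟩ : ∃ κ : ℝ, 0 < κ ∧ 4 * κ = t * ε := ⟨t * ε / 4, by positivity, by ring⟩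
  obtain ⟨α, hαeq⟩ : ∃ α : ℝ, α = b - ε := ⟨b - ε, rfl⟩
  obtain ⟨β, hβeq⟩ : ∃ β : ℝ, β = b + ε := ⟨b + ε, rfl⟩
  have hα1 : 1 < α := by rw [hαeq]; linarith
  have hκα : 0 < κ * (α - 1) := by nlinarith
  obtain ⟨M, hM⟩ := exists_nat_ge (max (max 1 (2 * lam / δ))
      (max (8 * lam / (t * ε)) (max (Real.log 2 / (κ * (α - 1))) (Real.log 8 / κ))))
  have hM1r : (1 : ℝ) ≤ M := le_trans (le_trans (le_max_left _ _) (le_max_left _ _)) hM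
  have hM1 : 1 ≤ M := by exact_mod_cast hM1r
  have hMlam : 2 * lam ≤ δ * M := by
    have h := le_trans (le_trans (le_max_right _ _) (le_max_left _ _)) hM
    have := (div_le_iff₀ hδ).mp h
    linarith
  have hMtail : 8 * lam ≤ t * ε * M := by
    have h := le_trans (le_trans (le_max_left _ _) (le_max_right _ _)) hM
    have := (div_le_iff₀ (by positivity : (0:ℝ) < t * ε)).mp h
    linarith
  have hMlog2 : Real.log 2 ≤ κ * (α - 1) * M := by
    have h := le_trans (le_trans (le_trans (le_max_left _ _) (le_max_right _ _))
      (le_max_right _ _)) hM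
    have := (div_le_iff₀ hκα).mp h
    linarith
  have hMlog8 : Real.log 8 ≤ κ * M := by
    have h := le_trans (le_trans (le_trans (le_max_right _ _) (le_max_right _ _))
      (le_max_right _ _)) hM
    have := (div_le_iff₀ hκ).mp h
    linarith
  refine ⟨α, β, κ, M, hα1, hκ, hM1, ?_, ?_, ?_, ?_⟩
  · -- forced zero
    intro m ℓ hm h1 h2
    have hmr : (M : ℝ) ≤ m := by exact_mod_cast hm
    have hm0 : (0 : ℝ) ≤ m := le_trans (by linarith) hmr
    rw [hαeq] at h1; rw [hβeq] at h2
    have habs : |(ℓ : ℝ) - b * m| ≤ ε * m := by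
      rw [abs_le]; constructor <;> nlinarith
    have h3 : a * ℓ - a * (b * m) ≤ |a| * (ε * m) := by
      calc a * ℓ - a * (b * m) = a * ((ℓ : ℝ) - b * m) := by ring
        _ ≤ |a * ((ℓ : ℝ) - b * m)| := le_abs_self _
        _ = |a| * |(ℓ : ℝ) - b * m| := abs_mul _ _
        _ ≤ |a| * (ε * m) := mul_le_mul_of_nonneg_left habs (abs_nonneg a)
    have h4 : |a| * ε ≤ δ / 2 := by nlinarith [abs_nonneg a, hε.le]
    have h7 : 2 * lam ≤ δ * m := le_trans hMlam (mul_le_mul_of_nonneg_left hmr hδ.le)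
    have hE : (a * b + c) * (m:ℝ) = -(δ * m) := by rw [hδeq]; ring
    have hF := mul_le_mul_of_nonneg_right h4 hm0
    linarith [h3, hF, h7, hE]
  · -- round bound
    intro m hm
    have hmr : (M : ℝ) ≤ m := by exact_mod_cast hm
    have hm0 : (0 : ℝ) ≤ m := le_trans (by linarith) hmr
    have hs : (0:ℝ) ≤ b * m + lam := by positivity
    have hexp1 : Real.exp t * (1 - t) ≤ 1 := by
      have h1 := Real.add_one_le_exp (-t)
      have h2 : Real.exp t * (-t + 1) ≤ Real.exp t * Real.exp (-t) :=
        mul_le_mul_of_nonneg_left h1 (Real.exp_pos t).le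
      rw [← Real.exp_add, add_neg_cancel, Real.exp_zero] at h2
      linarith
    have he1 : Real.exp t - 1 ≤ t * (1 + 2 * t) := by
      have h3 : (1:ℝ) ≤ (1 + t * (1 + 2 * t)) * (1 - t) := by nlinarith [sq_nonneg t]
      have h5 : (0:ℝ) < 1 - t := by linarith
      nlinarith [hexp1, h3, h5]
    have hexp2 : Real.exp (-t) * (1 + t) ≤ 1 := by
      have h1 := Real.add_one_le_exp t
      have h2 : Real.exp (-t) * (t + 1) ≤ Real.exp (-t) * Real.exp t :=
        mul_le_mul_of_nonneg_left h1 (Real.exp_pos (-t)).le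
      rw [← Real.exp_add, neg_add_cancel, Real.exp_zero] at h2
      linarith
    have he2 : Real.exp (-t) - 1 ≤ -t * (1 - t) := by
      have h3 : (1:ℝ) ≤ (1 + (-t * (1 - t))) * (1 + t) := by nlinarith [sq_nonneg t, mul_nonneg (mul_nonneg ht.le ht.le) ht.le]
      have h5 : (0:ℝ) < 1 + t := by linarith
      nlinarith [hexp2, h3, h5]
    have hm8 : 8 * lam ≤ t * ε * m := le_trans hMtail
      (mul_le_mul_of_nonneg_left hmr (by positivity : (0:ℝ) ≤ t * ε))
    have hup := tail_aux (b * m + lam) (β * m) t hs (fun k => β * m ≤ (k : ℝ))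
      (fun k hk => by have := mul_le_mul_of_nonneg_left hk ht.le; linarith)
    have hupb : (b * m + lam) * Real.exp t - (b * m + lam) - t * (β * m) ≤ -(κ * m) := by
      have h2 : (b * m + lam) * (Real.exp t - 1) ≤ (b * m + lam) * (t * (1 + 2 * t)) :=
        mul_le_mul_of_nonneg_left he1 hs
      rw [hβeq]
      have hA : 4 * b * t * (t * m) ≤ ε * (t * m) :=
        mul_le_mul_of_nonneg_right htb (mul_nonneg ht.le hm0)
      have hB : t + 2 * (t * t) ≤ 1 := by nlinarith
      have hC : lam * (t + 2 * (t * t)) ≤ lam * 1 := mul_le_mul_of_nonneg_left hB hlam.le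
      have hD : 4 * (κ * m) = t * ε * m := by rw [← hκeq]; ring
      linarith [h2, hA, hC, hm8, hD]
    have hlo := tail_aux (b * m + lam) (α * m) (-t) hs (fun k => (k : ℝ) ≤ α * m)
      (fun k hk => by have := mul_le_mul_of_nonneg_left hk ht.le; nlinarith)
    have hlob : (b * m + lam) * Real.exp (-t) - (b * m + lam) - (-t) * (α * m) ≤ -(κ * m) := by
      have h1 : (b * m + lam) * (Real.exp (-t) - 1) ≤ (b * m) * (Real.exp (-t) - 1) := by
        apply mul_le_mul_of_nonpos_right (by linarith)
          (by nlinarith [Real.exp_pos (-t)] : Real.exp (-t) - 1 ≤ 0)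
      have h2 : (b * m) * (Real.exp (-t) - 1) ≤ (b * m) * (-t * (1 - t)) :=
        mul_le_mul_of_nonneg_left he2 (by positivity)
      rw [hαeq]
      have hA : 4 * b * t * (t * m) ≤ ε * (t * m) :=
        mul_le_mul_of_nonneg_right htb (mul_nonneg ht.le hm0)
      have hD : 4 * (κ * m) = t * ε * m := by rw [← hκeq]; ring
      linarith [h1, h2, hA, hD]
    have key := one_le_sum_add_tails (b * m + lam) α β hs m
    have hup2 : (∑' k : ℕ, if β * m ≤ (k : ℝ) then poissonPMF (b * m + lam) k else 0)
        ≤ Real.exp (-(κ * m)) := le_trans hup (Real.exp_le_exp.mpr hupb)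
    have hlo2 : (∑' k : ℕ, if (k : ℝ) ≤ α * m then poissonPMF (b * m + lam) k else 0)
        ≤ Real.exp (-(κ * m)) := le_trans hlo (Real.exp_le_exp.mpr hlob)
    linarith
  · -- halving
    intro m hm
    have hmr : (M : ℝ) ≤ m := by exact_mod_cast hm
    have hlog : Real.log 2 ≤ κ * (α - 1) * m :=
      le_trans hMlog2 (mul_le_mul_of_nonneg_left hmr hκα.le)
    have h1 : Real.exp (-(κ * (α - 1) * m)) ≤ 1 / 2 := by
      calc Real.exp (-(κ * (α - 1) * m)) ≤ Real.exp (-Real.log 2) :=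
            Real.exp_le_exp.mpr (by linarith)
        _ = 1 / 2 := by
            rw [Real.exp_neg, Real.exp_log (by norm_num : (0:ℝ) < 2)]; norm_num
    have h2 : Real.exp (-(κ * (α * m)))
        = Real.exp (-(κ * m)) * Real.exp (-(κ * (α - 1) * m)) := by
      rw [← Real.exp_add]; ring_nf
    rw [h2]
    have := mul_le_mul_of_nonneg_left h1 (Real.exp_pos (-(κ * m))).le
    linarith
  · -- eighth
    intro m hm
    have hmr : (M : ℝ) ≤ m := by exact_mod_cast hm
    have hlog : Real.log 8 ≤ κ * m :=
      le_trans hMlog8 (mul_le_mul_of_nonneg_left hmr hκ.le)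
    calc Real.exp (-(κ * ↑m)) ≤ Real.exp (-Real.log 8) :=
          Real.exp_le_exp.mpr (by linarith)
      _ ≤ 1 / 8 := by
          rw [Real.exp_neg, Real.exp_log (by norm_num : (0:ℝ) < 8)]; norm_num
noncomputable def Aset (α β : ℝ) : ℕ → ℕ → Finset (List ℕ)
  | 0, _ => {[]}
  | n + 1, m => (Im α β m).biUnion (fun ℓ => (Aset α β n ℓ).image (fun v => ℓ :: v))

noncomputable def W (b lam : ℝ) : ℕ → List ℕ → ℝ
  | _, [] => 1
  | m, ℓ :: v => poissonPMF (b * m + lam) ℓ * W b lam ℓ v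

def seqOf (m : ℕ) (v : List ℕ) : ℕ → ℕ := fun k => (m :: v).getD k 0

lemma seqOf_zero (m : ℕ) (v : List ℕ) : seqOf m v 0 = m := rfl

lemma seqOf_succ (m ℓ : ℕ) (w : List ℕ) (k : ℕ) :
    seqOf m (ℓ :: w) (k + 1) = seqOf ℓ w k := rfl

def ipath (m : ℕ) (v : List ℕ) (i : ℕ) : ℕ × ℕ × ℕ :=
  if i % 2 = 0 then (0, seqOf m v (i / 2), 0)
  else (seqOf m v (i / 2 + 1), 0, seqOf m v (i / 2))

lemma ipath_shift (m ℓ : ℕ) (w : List ℕ) (i : ℕ) :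
    ipath m (ℓ :: w) (i + 2) = ipath ℓ w i := by
  have h1 : (i + 2) % 2 = i % 2 := by omega
  have h2 : (i + 2) / 2 = i / 2 + 1 := by omega
  simp only [ipath, h1, h2, seqOf_succ]

def fpath (m : ℕ) (v : List ℕ) : ℕ → ℕ × ℕ × ℕ
  | 0 => (0, 0, 0)
  | 1 => (m, 0, 0)
  | i + 2 => ipath m v i

lemma mem_Aset_zero {α β : ℝ} {m : ℕ} {v : List ℕ} :
    v ∈ Aset α β 0 m ↔ v = [] := by simp [Aset]

lemma mem_Aset_succ {α β : ℝ} {n m : ℕ} {v : List ℕ} :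
    v ∈ Aset α β (n + 1) m ↔ ∃ ℓ ∈ Im α β m, ∃ w ∈ Aset α β n ℓ, v = ℓ :: w := by
  simp only [Aset, Finset.mem_biUnion, Finset.mem_image]
  constructor
  · rintro ⟨ℓ, hℓ, w, hw, rfl⟩; exact ⟨ℓ, hℓ, w, hw, rfl⟩
  · rintro ⟨ℓ, hℓ, w, hw, rfl⟩; exact ⟨ℓ, hℓ, w, hw, rfl⟩

lemma length_mem_Aset {α β : ℝ} : ∀ {n m : ℕ} {v : List ℕ}, v ∈ Aset α β n m → v.length = n := by
  intro n
  induction n with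
  | zero => intro m v hv; rw [mem_Aset_zero.mp hv]; rfl
  | succ n ih =>
    intro m v hv
    obtain ⟨ℓ, _, w, hw, rfl⟩ := mem_Aset_succ.mp hv
    simp [ih hw]

lemma Im_gt {α β : ℝ} {m ℓ : ℕ} (hα1 : 1 < α) (hm : 1 ≤ m) (h : ℓ ∈ Im α β m) : m < ℓ := by
  have h1 := (mem_Im.mp h).1
  have hm0 : (1 : ℝ) ≤ m := by exact_mod_cast hm
  have : (m : ℝ) < ℓ := by nlinarith
  exact_mod_cast this

lemma seqOf_lower {α β : ℝ} (hα1 : 1 < α) :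
    ∀ (n m : ℕ) (v : List ℕ), 1 ≤ m → v ∈ Aset α β n m → ∀ k ≤ n, m ≤ seqOf m v k := by
  intro n
  induction n with
  | zero =>
    intro m v _ hv k hk
    interval_cases k
    simp [seqOf_zero]
  | succ n ih =>
    intro m v hm hv k hk
    obtain ⟨ℓ, hℓ, w, hw, rfl⟩ := mem_Aset_succ.mp hv
    cases k with
    | zero => simp [seqOf_zero]
    | succ k =>
      have hmℓ : m < ℓ := Im_gt hα1 hm hℓ
      have h1 : ℓ ≤ seqOf ℓ w k := ih ℓ w (by omega) hw k (by omega)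
      rw [seqOf_succ]
      omega

lemma W_nonneg (b lam : ℝ) (hb : 0 < b) (hlam : 0 < lam) :
    ∀ (v : List ℕ) (m : ℕ), 0 ≤ W b lam m v := by
  intro v
  induction v with
  | nil => intro m; simp [W]
  | cons ℓ w ih =>
    intro m
    have hs : (0:ℝ) ≤ b * m + lam := by positivity
    exact mul_nonneg (pois_nonneg hs ℓ) (ih ℓ)

lemma sum_W_ge (α β b lam κ : ℝ) (M : ℕ) (hα1 : 1 < α) (hκ : 0 < κ)
    (hb : 0 < b) (hlam : 0 < lam) (hM1 : 1 ≤ M)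
    (hround : ∀ m : ℕ, M ≤ m →
      1 - 2 * Real.exp (-(κ * m)) ≤ ∑ ℓ ∈ Im α β m, poissonPMF (b * m + lam) ℓ)
    (hhalf : ∀ m : ℕ, M ≤ m → 2 * Real.exp (-(κ * (α * m))) ≤ Real.exp (-(κ * m)))
    (heighth : ∀ m : ℕ, M ≤ m → Real.exp (-(κ * m)) ≤ 1 / 8) :
    ∀ (n m : ℕ), M ≤ m →
      1 - 4 * Real.exp (-(κ * m)) ≤ ∑ v ∈ Aset α β n m, W b lam m v := by
  intro n
  induction n with
  | zero => intro m _; simp [Aset, W]; positivity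
  | succ n ih =>
    intro m hm
    have hm1 : 1 ≤ m := le_trans hM1 hm
    have hmr : (0:ℝ) ≤ m := by positivity
    have hs : (0:ℝ) ≤ b * m + lam := by positivity
    -- rewrite the sum
    have hdisj : (↑(Im α β m) : Set ℕ).PairwiseDisjoint
        (fun ℓ => (Aset α β n ℓ).image (fun v => ℓ :: v)) := by
      intro x hx y hy hxy
      simp only [Function.onFun, Finset.disjoint_left]
      intro v hv hv'
      simp only [Finset.mem_image] at hv hv'
      obtain ⟨w, _, rfl⟩ := hv
      obtain ⟨w', _, h⟩ := hv'
      injection h with h1 h2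
      exact hxy h1.symm
    have hsum : ∑ v ∈ Aset α β (n+1) m, W b lam m v
        = ∑ ℓ ∈ Im α β m, poissonPMF (b * m + lam) ℓ * ∑ w ∈ Aset α β n ℓ, W b lam ℓ w := by
      rw [show Aset α β (n+1) m
          = (Im α β m).biUnion (fun ℓ => (Aset α β n ℓ).image (fun v => ℓ :: v)) from rfl]
      rw [Finset.sum_biUnion hdisj]
      refine Finset.sum_congr rfl (fun ℓ hℓ => ?_)
      rw [Finset.sum_image (fun x _ y _ h => by injection h), Finset.mul_sum]
      exact Finset.sum_congr rfl (fun w hw => rfl)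
    rw [hsum]
    have hstep : ∀ ℓ ∈ Im α β m,
        poissonPMF (b * m + lam) ℓ * (1 - 4 * Real.exp (-(κ * (α * m))))
          ≤ poissonPMF (b * m + lam) ℓ * ∑ w ∈ Aset α β n ℓ, W b lam ℓ w := by
      intro ℓ hℓ
      have hℓm : m < ℓ := Im_gt hα1 hm1 hℓ
      have hℓM : M ≤ ℓ := by omega
      have hαℓ : α * m ≤ (ℓ : ℝ) := (mem_Im.mp hℓ).1.le
      have h1 : Real.exp (-(κ * ℓ)) ≤ Real.exp (-(κ * (α * m))) := by
        apply Real.exp_le_exp.mpr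
        have := mul_le_mul_of_nonneg_left hαℓ hκ.le
        linarith
      have h2 := ih ℓ hℓM
      apply mul_le_mul_of_nonneg_left _ (pois_nonneg hs ℓ)
      linarith
    have hE : Real.exp (-(κ * m)) ≤ 1/8 := heighth m hm
    have hE2 : 2 * Real.exp (-(κ * (α * m))) ≤ Real.exp (-(κ * m)) := hhalf m hm
    have hpos : (0:ℝ) ≤ 1 - 4 * Real.exp (-(κ * (α * m))) := by
      nlinarith [Real.exp_pos (-(κ * m))]
    calc 1 - 4 * Real.exp (-(κ * m))
        ≤ (1 - 4 * Real.exp (-(κ * (α * m)))) * (1 - 2 * Real.exp (-(κ * m))) := by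
          nlinarith [Real.exp_pos (-(κ * m)), Real.exp_pos (-(κ * (α * m)))]
      _ ≤ (1 - 4 * Real.exp (-(κ * (α * m)))) * ∑ ℓ ∈ Im α β m, poissonPMF (b * m + lam) ℓ :=
          mul_le_mul_of_nonneg_left (hround m hm) hpos
      _ = ∑ ℓ ∈ Im α β m, poissonPMF (b * m + lam) ℓ * (1 - 4 * Real.exp (-(κ * (α * m)))) := by
          rw [Finset.mul_sum]; exact Finset.sum_congr rfl (fun ℓ _ => by ring)
      _ ≤ ∑ ℓ ∈ Im α β m, poissonPMF (b * m + lam) ℓ * ∑ w ∈ Aset α β n ℓ, W b lam ℓ w :=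
          Finset.sum_le_sum hstep
lemma pois_zero_zero : poissonPMF 0 0 = 1 := by simp [poissonPMF]

lemma ipath_zero (m : ℕ) (v : List ℕ) : ipath m v 0 = (0, m, 0) := by
  simp [ipath, seqOf]

lemma ipath_one (m ℓ : ℕ) (w : List ℕ) : ipath m (ℓ :: w) 1 = (ℓ, 0, m) := by
  simp [ipath, seqOf]

lemma ipath_two (m ℓ : ℕ) (w : List ℕ) : ipath m (ℓ :: w) 2 = (0, ℓ, 0) := by
  simp [ipath, seqOf]

lemma prod_inner (a b c lam α β : ℝ) (M : ℕ) (hα1 : 1 < α) (hb : 0 < b) (hlam : 0 < lam)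
    (hM1 : 1 ≤ M)
    (hzero : ∀ m ℓ : ℕ, M ≤ m → α * m < (ℓ : ℝ) → (ℓ : ℝ) < β * m → a * ℓ + c * m + lam ≤ 0) :
    ∀ (n m : ℕ) (v : List ℕ), M ≤ m → v ∈ Aset α β n m →
      ∏ i ∈ Finset.range (2 * n),
        hawkes3P a b c lam (ipath m v i) (ipath m v (i + 1)) = W b lam m v := by
  intro n
  induction n with
  | zero =>
    intro m v _ hv
    rw [mem_Aset_zero.mp hv]
    simp [W]
  | succ n ih =>
    intro m v hm hv
    obtain ⟨ℓ, hℓ, w, hw, rfl⟩ := mem_Aset_succ.mp hv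
    have hm1 : 1 ≤ m := le_trans hM1 hm
    have hℓM : M ≤ ℓ := le_trans hm (Im_gt hα1 hm1 hℓ).le
    have h2n : 2 * (n + 1) = 2 * n + 1 + 1 := by ring
    rw [h2n, Finset.prod_range_succ', Finset.prod_range_succ']
    have hshift : ∀ i : ℕ,
        hawkes3P a b c lam (ipath m (ℓ :: w) (i + 1 + 1)) (ipath m (ℓ :: w) (i + 1 + 1 + 1))
          = hawkes3P a b c lam (ipath ℓ w i) (ipath ℓ w (i + 1)) := by
      intro i
      rw [show i + 1 + 1 = i + 2 from rfl, show i + 1 + 1 + 1 = (i + 1) + 2 from rfl,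
        ipath_shift, ipath_shift]
    have hf0 : hawkes3P a b c lam (ipath m (ℓ :: w) 0) (ipath m (ℓ :: w) (0 + 1))
        = poissonPMF (b * m + lam) ℓ := by
      rw [ipath_zero, show (0:ℕ) + 1 = 1 from rfl, ipath_one]
      have hcond : ((ℓ, 0, m) : ℕ × ℕ × ℕ).2.1 = ((0, m, 0) : ℕ × ℕ × ℕ).1
          ∧ ((ℓ, 0, m) : ℕ × ℕ × ℕ).2.2 = ((0, m, 0) : ℕ × ℕ × ℕ).2.1 := ⟨rfl, rfl⟩
      rw [hawkes3P, if_pos hcond]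
      have hs3 : s3 a b c lam (0, m, 0) = b * m + lam := by
        rw [s3]
        have : a * ((0:ℕ):ℝ) + b * ((m:ℕ):ℝ) + c * ((0:ℕ):ℝ) + lam = b * m + lam := by
          push_cast; ring
        rw [this]
        exact max_eq_left (by positivity)
      rw [hs3]
    have hf1 : hawkes3P a b c lam (ipath m (ℓ :: w) (0 + 1)) (ipath m (ℓ :: w) (0 + 1 + 1))
        = 1 := by
      rw [show (0:ℕ) + 1 = 1 from rfl, show (0:ℕ) + 1 + 1 = 2 from rfl, ipath_one, ipath_two]
      have hcond : ((0, ℓ, 0) : ℕ × ℕ × ℕ).2.1 = ((ℓ, 0, m) : ℕ × ℕ × ℕ).1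
          ∧ ((0, ℓ, 0) : ℕ × ℕ × ℕ).2.2 = ((ℓ, 0, m) : ℕ × ℕ × ℕ).2.1 := ⟨rfl, rfl⟩
      rw [hawkes3P, if_pos hcond]
      have hs3 : s3 a b c lam (ℓ, 0, m) = 0 := by
        rw [s3]
        have h1 : a * ((ℓ:ℕ):ℝ) + b * ((0:ℕ):ℝ) + c * ((m:ℕ):ℝ) + lam
            = a * ℓ + c * m + lam := by push_cast; ring
        rw [h1]
        have := hzero m ℓ hm (mem_Im.mp hℓ).1 (mem_Im.mp hℓ).2
        exact max_eq_right this
      rw [hs3, pois_zero_zero]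
    rw [hf0, hf1]
    have : (∏ i ∈ Finset.range (2 * n),
        hawkes3P a b c lam (ipath m (ℓ :: w) (i + 1 + 1)) (ipath m (ℓ :: w) (i + 1 + 1 + 1)))
        = W b lam ℓ w := by
      rw [Finset.prod_congr rfl (fun i _ => hshift i)]
      exact ih ℓ w hℓM hw
    rw [this, W]
    ring

lemma prod_full (a b c lam α β : ℝ) (M : ℕ) (hα1 : 1 < α) (hb : 0 < b) (hlam : 0 < lam)
    (hM1 : 1 ≤ M)
    (hzero : ∀ m ℓ : ℕ, M ≤ m → α * m < (ℓ : ℝ) → (ℓ : ℝ) < β * m → a * ℓ + c * m + lam ≤ 0)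
    (m₀ : ℕ) (hm₀ : M ≤ m₀) (n : ℕ) (v : List ℕ) (hv : v ∈ Aset α β n m₀) :
    ∏ i ∈ Finset.range (2 * n + 2),
        hawkes3P a b c lam (fpath m₀ v i) (fpath m₀ v (i + 1))
      = poissonPMF lam m₀ * poissonPMF (max (a * m₀ + lam) 0) 0 * W b lam m₀ v := by
  rw [show 2 * n + 2 = 2 * n + 1 + 1 from rfl, Finset.prod_range_succ', Finset.prod_range_succ']
  have hshift : ∀ i : ℕ,
      hawkes3P a b c lam (fpath m₀ v (i + 1 + 1)) (fpath m₀ v (i + 1 + 1 + 1))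
        = hawkes3P a b c lam (ipath m₀ v i) (ipath m₀ v (i + 1)) := fun i => rfl
  have hf0 : hawkes3P a b c lam (fpath m₀ v 0) (fpath m₀ v (0 + 1))
      = poissonPMF lam m₀ := by
    show hawkes3P a b c lam (0, 0, 0) (m₀, 0, 0) = _
    have hcond : ((m₀, 0, 0) : ℕ × ℕ × ℕ).2.1 = ((0, 0, 0) : ℕ × ℕ × ℕ).1
        ∧ ((m₀, 0, 0) : ℕ × ℕ × ℕ).2.2 = ((0, 0, 0) : ℕ × ℕ × ℕ).2.1 := ⟨rfl, rfl⟩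
    rw [hawkes3P, if_pos hcond]
    have hs3 : s3 a b c lam (0, 0, 0) = lam := by
      rw [s3]
      have : a * ((0:ℕ):ℝ) + b * ((0:ℕ):ℝ) + c * ((0:ℕ):ℝ) + lam = lam := by push_cast; ring
      rw [this]
      exact max_eq_left hlam.le
    rw [hs3]
  have hf1 : hawkes3P a b c lam (fpath m₀ v (0 + 1)) (fpath m₀ v (0 + 1 + 1))
      = poissonPMF (max (a * m₀ + lam) 0) 0 := by
    have h2 : fpath m₀ v (0 + 1 + 1) = (0, m₀, 0) := by
      show ipath m₀ v 0 = _; exact ipath_zero m₀ v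
    rw [show (0:ℕ) + 1 = 1 from rfl] at *
    show hawkes3P a b c lam (m₀, 0, 0) (fpath m₀ v 2) = _
    rw [show fpath m₀ v 2 = ipath m₀ v 0 from rfl, ipath_zero]
    have hcond : ((0, m₀, 0) : ℕ × ℕ × ℕ).2.1 = ((m₀, 0, 0) : ℕ × ℕ × ℕ).1
        ∧ ((0, m₀, 0) : ℕ × ℕ × ℕ).2.2 = ((m₀, 0, 0) : ℕ × ℕ × ℕ).2.1 := ⟨rfl, rfl⟩
    rw [hawkes3P, if_pos hcond]
    have hs3 : s3 a b c lam (m₀, 0, 0) = max (a * m₀ + lam) 0 := by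
      rw [s3]
      have : a * ((m₀:ℕ):ℝ) + b * ((0:ℕ):ℝ) + c * ((0:ℕ):ℝ) + lam = a * m₀ + lam := by
        push_cast; ring
      rw [this]
    rw [hs3]
  rw [hf0, hf1]
  have : (∏ i ∈ Finset.range (2 * n),
      hawkes3P a b c lam (fpath m₀ v (i + 1 + 1)) (fpath m₀ v (i + 1 + 1 + 1)))
      = W b lam m₀ v := by
    rw [Finset.prod_congr rfl (fun i _ => hshift i)]
    exact prod_inner a b c lam α β M hα1 hb hlam hM1 hzero n m₀ v hm₀ hv
  rw [this]
  ring
end H3aux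

namespace H3aux
lemma pois_apply_zero (s : ℝ) : poissonPMF s 0 = Real.exp (-s) := by simp [poissonPMF]

lemma getD_take_lt (l : List ℕ) (n i : ℕ) (h : i < n) (h2 : i < l.length) :
    (l.take n).getD i 0 = l.getD i 0 := by
  rw [List.getD_eq_getElem _ _ (by simp [List.length_take]; omega),
    List.getD_eq_getElem _ _ h2]
  simp [List.getElem_take]

lemma Aset_take {α β : ℝ} :
    ∀ (n m : ℕ) (v : List ℕ), v ∈ Aset α β (n + 1) m → v.take n ∈ Aset α β n m := by
  intro n
  induction n with
  | zero => intro m v _; simpa [mem_Aset_zero] using List.take_zero v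
  | succ n ih =>
    intro m v hv
    obtain ⟨ℓ, hℓ, w, hw, rfl⟩ := mem_Aset_succ.mp hv
    rw [List.take_succ_cons]
    exact mem_Aset_succ.mpr ⟨ℓ, hℓ, w.take n, ih ℓ w hw, rfl⟩

lemma seqOf_take {n m : ℕ} {v : List ℕ} (hlen : n < v.length) :
    ∀ k ≤ n, seqOf m (v.take n) k = seqOf m v k := by
  intro k hk
  cases k with
  | zero => rfl
  | succ k =>
    show (v.take n).getD k 0 = v.getD k 0
    exact getD_take_lt v n k (by omega) (by omega)

lemma fpath_take {n m : ℕ} {v : List ℕ} (hlen : n < v.length) :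
    ∀ i ≤ 2 * n + 2, fpath m (v.take n) i = fpath m v i := by
  intro i hi
  match i with
  | 0 => rfl
  | 1 => rfl
  | (j + 2) =>
    show ipath m (v.take n) j = ipath m v j
    unfold ipath
    by_cases hj : j % 2 = 0
    · have h1 : j / 2 ≤ n := by omega
      simp only [hj, if_true, seqOf_take hlen _ h1]
    · have h1 : j / 2 + 1 ≤ n := by omega
      have h2 : j / 2 ≤ n := by omega
      simp only [hj, if_false, seqOf_take hlen _ h1, seqOf_take hlen _ h2]

lemma fpath_even (m : ℕ) (v : List ℕ) (k : ℕ) :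
    fpath m v (2 * k + 2) = (0, seqOf m v k, 0) := by
  show ipath m v (2 * k) = _
  have h1 : (2 * k) % 2 = 0 := by omega
  have h2 : (2 * k) / 2 = k := by omega
  simp [ipath, h1, h2]

lemma fpath_inj {α β : ℝ} {n m : ℕ} {v v' : List ℕ}
    (hv : v ∈ Aset α β n m) (hv' : v' ∈ Aset α β n m)
    (h : ∀ i ≤ 2 * n + 2, fpath m v i = fpath m v' i) : v = v' := by
  have hl : v.length = v'.length := by rw [length_mem_Aset hv, length_mem_Aset hv']
  refine List.ext_getElem hl ?_
  intro i h1 h2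
  have hin : i < n := by rw [length_mem_Aset hv] at h1; exact h1
  have key := h (2 * (i + 1) + 2) (by omega)
  rw [fpath_even, fpath_even] at key
  have hs : seqOf m v (i + 1) = seqOf m v' (i + 1) := by
    have := congrArg (fun p : ℕ × ℕ × ℕ => p.2.1) key
    simpa using this
  have hgd : v.getD i 0 = v'.getD i 0 := hs
  rw [List.getD_eq_getElem _ _ h1, List.getD_eq_getElem _ _ h2] at hgd
  exact hgd

lemma measurable_cyl (N : ℕ) (g : ℕ → ℕ × ℕ × ℕ) :
    MeasurableSet {ω : ℕ → ℕ × ℕ × ℕ | ∀ i ≤ N, ω i = g i} := by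
  have : {ω : ℕ → ℕ × ℕ × ℕ | ∀ i ≤ N, ω i = g i}
      = ⋂ i ∈ Set.Iic N, (fun ω : ℕ → ℕ × ℕ × ℕ => ω i) ⁻¹' {g i} := by
    ext ω; simp [Set.mem_iInter, Set.mem_Iic]
  rw [this]
  exact MeasurableSet.biInter (Set.to_countable _)
    (fun i _ => (measurable_pi_apply i) (measurableSet_singleton _))

end H3aux

/-- If `b > 1` and `ab + c < 0`, then the discrete-time Hawkes chain with memory `3`
and parameters `(a,b,c,λ)`, started at `(0,0,0)`, never returns to `(0,0,0)` with positive
probability (hence is transient). Here `μ x` is the trajectory law of the chain started at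
`x`, characterized by the cylinder formula (Ionescu-Tulcea construction). -/
theorem hawkes3_transient_case2 (a b c lam : ℝ) (hlam : 0 < lam)
    (hb : 1 < b) (habc : a * b + c < 0)
    (μ : ℕ × ℕ × ℕ → Measure (ℕ → ℕ × ℕ × ℕ))
    (hprob : ∀ x, IsProbabilityMeasure (μ x))
    (hcyl : ∀ (x : ℕ × ℕ × ℕ) (n : ℕ) (s : ℕ → ℕ × ℕ × ℕ),
      (μ x {ω | ∀ i ≤ n, ω i = s i}).toReal
        = (if s 0 = x then 1 else 0)
            * ∏ i ∈ Finset.range n, hawkes3P a b c lam (s i) (s (i + 1))) :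
    0 < μ (0, 0, 0) {ω | ∀ n ≥ 1, ω n ≠ (0, 0, 0)} := by
  classical
  obtain ⟨α, β, κ, M, hα1, hκ, hM1, hzero, hround, hhalf, heighth⟩ :=
    H3aux.exists_setup a b c lam hlam hb habc
  have hb0 : 0 < b := by linarith
  haveI : IsProbabilityMeasure (μ (0, 0, 0)) := hprob _
  set p₀ : ℝ := poissonPMF lam M with hp₀def
  set q₀ : ℝ := poissonPMF (max (a * M + lam) 0) 0 with hq₀def
  have hp₀ : 0 < p₀ := by rw [hp₀def]; unfold poissonPMF; positivity
  have hq₀ : 0 < q₀ := by rw [hq₀def, H3aux.pois_apply_zero]; exact Real.exp_pos _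
  set C : ℕ → List ℕ → Set (ℕ → ℕ × ℕ × ℕ) :=
    fun n v => {ω | ∀ i ≤ 2 * n + 2, ω i = H3aux.fpath M v i} with hCdef
  set E : ℕ → Set (ℕ → ℕ × ℕ × ℕ) :=
    fun n => ⋃ v ∈ H3aux.Aset α β n M, C n v with hEdef
  have hCmeas : ∀ n v, MeasurableSet (C n v) := fun n v => H3aux.measurable_cyl _ _
  have hEmeas : ∀ n, MeasurableSet (E n) :=
    fun n => Finset.measurableSet_biUnion _ (fun v _ => hCmeas n v)
  -- value of cylinder measures
  have hCval : ∀ (n : ℕ) (v : List ℕ), v ∈ H3aux.Aset α β n M →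
      μ (0, 0, 0) (C n v) = ENNReal.ofReal (p₀ * q₀ * H3aux.W b lam M v) := by
    intro n v hv
    have h1 := hcyl (0, 0, 0) (2 * n + 2) (H3aux.fpath M v)
    rw [H3aux.prod_full a b c lam α β M hα1 hb0 hlam hM1 hzero M le_rfl n v hv] at h1
    have h2 : H3aux.fpath M v 0 = ((0, 0, 0) : ℕ × ℕ × ℕ) := rfl
    rw [if_pos h2, one_mul] at h1
    have h3 : μ (0, 0, 0) (C n v) ≠ ⊤ := measure_ne_top _ _
    rw [← ENNReal.ofReal_toReal h3]
    exact congrArg ENNReal.ofReal h1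
  -- lower bound on μ (E n)
  have hsumW : ∀ n : ℕ, (1 : ℝ) / 2 ≤ ∑ v ∈ H3aux.Aset α β n M, H3aux.W b lam M v := by
    intro n
    have h1 := H3aux.sum_W_ge α β b lam κ M hα1 hκ hb0 hlam hM1 hround hhalf heighth n M le_rfl
    have h2 := heighth M le_rfl
    linarith
  have hEn : ∀ n : ℕ, ENNReal.ofReal (p₀ * q₀ * (1 / 2)) ≤ μ (0, 0, 0) (E n) := by
    intro n
    have hdisj : (↑(H3aux.Aset α β n M) : Set (List ℕ)).PairwiseDisjoint (C n) := by
      intro v hv v' hv' hvv'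
      rw [Function.onFun, Set.disjoint_left]
      intro ω hω hω'
      exact hvv' (H3aux.fpath_inj (Finset.mem_coe.mp hv) (Finset.mem_coe.mp hv')
        (fun i hi => ((hω i hi).symm.trans (hω' i hi))))
    have hmeq : μ (0, 0, 0) (E n) = ∑ v ∈ H3aux.Aset α β n M, μ (0, 0, 0) (C n v) :=
      measure_biUnion_finset hdisj (fun v _ => hCmeas n v)
    rw [hmeq]
    have hsum2 : ∑ v ∈ H3aux.Aset α β n M, μ (0, 0, 0) (C n v)
        = ENNReal.ofReal (∑ v ∈ H3aux.Aset α β n M, p₀ * q₀ * H3aux.W b lam M v) := by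
      rw [ENNReal.ofReal_sum_of_nonneg
        (fun v _ => by
          have := H3aux.W_nonneg b lam hb0 hlam v M
          positivity)]
      exact Finset.sum_congr rfl (fun v hv => hCval n v hv)
    rw [hsum2]
    apply ENNReal.ofReal_le_ofReal
    rw [← Finset.mul_sum]
    have := hsumW n
    nlinarith [mul_pos hp₀ hq₀]
  -- antitone
  have hanti : Antitone E := by
    apply antitone_nat_of_succ_le
    intro n ω hω
    simp only [hEdef, Set.mem_iUnion] at hω ⊢
    obtain ⟨v, hv, hmatch⟩ := hω
    have hlen : n < v.length := by rw [H3aux.length_mem_Aset hv]; omega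
    refine ⟨v.take n, H3aux.Aset_take n M v hv, ?_⟩
    intro i hi
    exact (hmatch i (by omega)).trans (H3aux.fpath_take hlen i hi).symm
  have hlim := MeasureTheory.tendsto_measure_iInter_atTop
    (μ := μ (0, 0, 0)) (s := E) (fun n => (hEmeas n).nullMeasurableSet) hanti
    ⟨0, measure_ne_top _ _⟩
  have hglb : ENNReal.ofReal (p₀ * q₀ * (1 / 2)) ≤ μ (0, 0, 0) (⋂ n, E n) :=
    ge_of_tendsto' hlim hEn
  -- inclusion
  have hsub : (⋂ n, E n) ⊆ {ω : ℕ → ℕ × ℕ × ℕ | ∀ n ≥ 1, ω n ≠ (0, 0, 0)} := by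
    intro ω hω τ hτ
    have hωτ : ω ∈ E τ := Set.mem_iInter.mp hω τ
    simp only [hEdef, Set.mem_iUnion] at hωτ
    obtain ⟨v, hv, hmatch⟩ := hωτ
    have hωeq : ω τ = H3aux.fpath M v τ := hmatch τ (by omega)
    rw [hωeq]
    have hlow := H3aux.seqOf_lower hα1 τ M v hM1 hv
    match τ, hτ with
    | 1, _ =>
      intro hcontra
      have : M = 0 := congrArg Prod.fst hcontra
      omega
    | (j + 2), _ =>
      show H3aux.ipath M v j ≠ _
      unfold H3aux.ipath
      by_cases hj : j % 2 = 0
      · simp only [hj, if_true]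
        intro hcontra
        have h1 : H3aux.seqOf M v (j / 2) = 0 := by
          have := congrArg (fun p : ℕ × ℕ × ℕ => p.2.1) hcontra
          simpa using this
        have h2 := hlow (j / 2) (by omega)
        omega
      · simp only [hj, if_false]
        intro hcontra
        have h1 : H3aux.seqOf M v (j / 2 + 1) = 0 := congrArg Prod.fst hcontra
        have h2 := hlow (j / 2 + 1) (by omega)
        omega
  calc (0 : ENNReal) < ENNReal.ofReal (p₀ * q₀ * (1 / 2)) := by
        rw [ENNReal.ofReal_pos]; positivity
    _ ≤ μ (0, 0, 0) (⋂ n, E n) := hglb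
    _ ≤ μ (0, 0, 0) {ω : ℕ → ℕ × ℕ × ℕ | ∀ n ≥ 1, ω n ≠ (0, 0, 0)} := measure_mono hsub
end

section
/- Let a, b, c ∈ ℝ with a ≥ 0, c < 0 and Disc(P) := a²b² + 4b³ − 4a³c − 18abc − 27c² < 0. Then ab + c < 0. -/
/-- If `a ≥ 0`, `c < 0` and `Disc(P) = a²b² + 4b³ − 4a³c − 18abc − 27c² < 0`
(the discriminant of `P(X) = X³ − aX² − bX − c`), then `ab + c < 0`. -/
theorem ab_add_c_neg (a b c : ℝ) (ha : 0 ≤ a) (hc : c < 0)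
    (hdisc : a ^ 2 * b ^ 2 + 4 * b ^ 3 - 4 * a ^ 3 * c - 18 * a * b * c - 27 * c ^ 2 < 0) :
    a * b + c < 0 := by
  by_contra h
  push_neg at h
  have hab : 0 < a * b := by linarith
  have hb : 0 < b := by
    rcases lt_or_ge 0 b with hb | hb
    · exact hb
    · nlinarith [mul_nonpos_of_nonneg_of_nonpos ha hb]
  have ha' : 0 < a := by
    rcases lt_or_ge 0 a with ha' | ha'
    · exact ha'
    · nlinarith
  obtain ⟨d, hd⟩ : ∃ d : ℝ, c = -d := ⟨-c, by ring⟩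
  subst hd
  have hd0 : 0 < d := by linarith
  have habd : d ≤ a * b := by linarith
  have hcube : d ^ 3 ≤ (a * b) ^ 3 := pow_le_pow_left₀ hd0.le habd 3
  have hx0 : 0 ≤ b ^ 3 + a ^ 3 * d := by positivity
  have hxsq : (b ^ 3 + a ^ 3 * d) ^ 2 ≥ 4 * d ^ 4 := by
    nlinarith [sq_nonneg (b ^ 3 - a ^ 3 * d), hcube, hd0]
  have hx : b ^ 3 + a ^ 3 * d ≥ 2 * d ^ 2 := by
    nlinarith [hxsq, hx0, sq_nonneg d]
  have hsq : d ^ 2 ≤ (a * b) ^ 2 := pow_le_pow_left₀ hd0.le habd 2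
  have h18 : d * d ≤ a * b * d := mul_le_mul_of_nonneg_right habd hd0.le
  nlinarith [hx, hsq, h18]
end

section
/- For all a ∈ ℝ and b > 0: (i) the polynomial identity (a² + 3b)³ − (9ab − a³)² = 27b(a² − b)² holds; and (ii) consequently 9ab − a³ ≤ (a² + 3b)^{3/2}. -/
/-- For all `a ∈ ℝ` and `b > 0`: (i) `(a² + 3b)³ − (9ab − a³)² = 27b(a² − b)²`; and
(ii) consequently `9ab − a³ ≤ (a² + 3b)^{3/2}`, where `(a² + 3b)^{3/2} = (√(a² + 3b))³`. -/
theorem key_estimate (a b : ℝ) (hb : 0 < b) :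
    (a ^ 2 + 3 * b) ^ 3 - (9 * a * b - a ^ 3) ^ 2 = 27 * b * (a ^ 2 - b) ^ 2
      ∧ 9 * a * b - a ^ 3 ≤ Real.sqrt (a ^ 2 + 3 * b) ^ 3 := by
  have hpos : (0:ℝ) ≤ a ^ 2 + 3 * b := by positivity
  refine ⟨by ring, ?_⟩
  have h1 : (9 * a * b - a ^ 3) ^ 2 ≤ (a ^ 2 + 3 * b) ^ 3 := by nlinarith [sq_nonneg (a^2 - b)]
  calc 9 * a * b - a ^ 3 ≤ |9 * a * b - a ^ 3| := le_abs_self _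
    _ = Real.sqrt ((9 * a * b - a ^ 3) ^ 2) := (Real.sqrt_sq_eq_abs _).symm
    _ ≤ Real.sqrt ((a ^ 2 + 3 * b) ^ 3) := Real.sqrt_le_sqrt h1
    _ = Real.sqrt (a ^ 2 + 3 * b) ^ 3 := by
        rw [show (a^2+3*b)^3 = (a^2+3*b)^2*(a^2+3*b) by ring,
          Real.sqrt_mul (by positivity) _, Real.sqrt_sq hpos,
          show Real.sqrt (a^2+3*b)^3 = Real.sqrt (a^2+3*b)^2 * Real.sqrt (a^2+3*b) from by ring,
          Real.sq_sqrt hpos]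
end
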